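/- arXiv:1703.10133 — 8 statements merged into one kernel-verified Lean document; each statement's English description precedes it below -/
import Mathlib

section
/- Let S ⊆ B with 0 < π(S) ≤ 1/2. Then the spectral gap satisfies Δ_H ≤ 2(‖H‖ − E₀)·π(∂S)/π(S). -/
open scoped BigOperators ComplexOrder

/-- The ℓ²-operator norm of a matrix over ℂ. -/
noncomputable def opNorm {B : Type*} [Fintype B] [DecidableEq B] (H : Matrix B B ℂ) : ℝ :=
  ‖Matrix.toEuclideanCLM (𝕜 := ℂ) H‖

/-- The ground-state probability measure of a subset `S`. -/
noncomputable def piS {B : Type*} (ψ : B → ℂ) (S : Finset B) : ℝ :=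
  ∑ z ∈ S, ‖ψ z‖ ^ 2

open scoped Classical in
/-- The interior boundary `∂S` of the set `S` with respect to the matrix `H`. -/
noncomputable def bdry {B : Type*} [Fintype B] (H : Matrix B B ℂ) (S : Finset B) : Finset B :=
  S.filter (fun x => ∃ y ∉ S, H x y ≠ 0)

/-!
Put `φ = 1_S ψ` and `p = π(S)`. The vector `φ - p ψ` is orthogonal to the ground state and has
squared norm `p (1 - p)`, so the variational principle bounds `(E₁ - E₀) p (1 - p)` by its energy
with respect to `H - E₀`; since `(H - E₀) ψ = 0`, this is the energy `⟪φ, (H - E₀) φ⟫` of `φ`.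
As `H` couples `S ∖ ∂S` only to `S`, the part of `φ` supported on `S ∖ ∂S` is
`(H - E₀)`-orthogonal to `φ`; removing it can only raise the energy, and what is left is
`1_{∂S} ψ`, whose energy is at most `(‖H‖ - E₀) π(∂S)`. Finally `1 - p ≥ 1/2`.
-/

open RCLike Matrix WithLp
open scoped InnerProductSpace ComplexConjugate

namespace LinearMap.IsSymmetric

variable {𝕜 E : Type*} [RCLike 𝕜] [NormedAddCommGroup E] [InnerProductSpace 𝕜 E]
  {T : E →ₗ[𝕜] E}

lemma re_inner_map_sub_sub (hT : T.IsSymmetric) (x y : E) :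
    re ⟪x - y, T (x - y)⟫_𝕜 = re ⟪x, T x⟫_𝕜 - 2 * re ⟪y, T x⟫_𝕜 + re ⟪y, T y⟫_𝕜 := by
  have hxy : re ⟪x, T y⟫_𝕜 = re ⟪y, T x⟫_𝕜 := by
    rw [← hT, ← inner_conj_symm, conj_re]
  simp only [map_sub, inner_sub_left, inner_sub_right, hxy]
  ring

lemma re_inner_map_sub_smul_of_map_eq_zero (hT : T.IsSymmetric) {ψ : E} (hψ : T ψ = 0)
    (x : E) (c : 𝕜) : re ⟪x - c • ψ, T (x - c • ψ)⟫_𝕜 = re ⟪x, T x⟫_𝕜 := by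
  rw [hT.re_inner_map_sub_sub, inner_smul_left, ← hT ψ x, hψ, map_smul, hψ]
  simp

end LinearMap.IsSymmetric

section Variational

variable {𝕜 E : Type*} [RCLike 𝕜] [NormedAddCommGroup E] [InnerProductSpace 𝕜 E]

lemma inner_sub_inner_smul_eq_zero {ψ : E} (hψ : ‖ψ‖ = 1) (x : E) :
    ⟪ψ, x - ⟪ψ, x⟫_𝕜 • ψ⟫_𝕜 = 0 := by
  rw [inner_sub_right, inner_smul_right, inner_self_eq_norm_sq_to_K, hψ]
  simp

lemma norm_sub_inner_smul_sq {ψ : E} (hψ : ‖ψ‖ = 1) (x : E) :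
    ‖x - ⟪ψ, x⟫_𝕜 • ψ‖ ^ 2 = ‖x‖ ^ 2 - ‖⟪ψ, x⟫_𝕜‖ ^ 2 := by
  rw [@norm_sub_sq 𝕜, inner_smul_right, ← inner_conj_symm x ψ, norm_smul, hψ, RCLike.mul_conj]
  norm_cast
  ring

lemma re_inner_apply_self_le_opNorm (T : E →L[𝕜] E) (x : E) :
    re ⟪x, T x⟫_𝕜 ≤ ‖T‖ * ‖x‖ ^ 2 :=
  calc re ⟪x, T x⟫_𝕜 ≤ ‖x‖ * ‖T x‖ := re_inner_le_norm _ _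
    _ ≤ ‖x‖ * (‖T‖ * ‖x‖) := by gcongr; exact T.le_opNorm x
    _ = ‖T‖ * ‖x‖ ^ 2 := by ring

theorem gap_mul_variance_le (T : E →L[𝕜] E) (hT : (T : E →ₗ[𝕜] E).IsSymmetric)
    {ψ : E} {e₀ e₁ : ℝ} (hψ : ‖ψ‖ = 1) (hTψ : T ψ = (e₀ : 𝕜) • ψ) (he : e₀ ≤ e₁)
    (hgap : ∀ x, ⟪ψ, x⟫_𝕜 = 0 → e₁ * ‖x‖ ^ 2 ≤ re ⟪x, T x⟫_𝕜) {φ d : E}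
    (hloc : ⟪φ - d, T φ⟫_𝕜 = e₀ * ⟪φ - d, φ⟫_𝕜) :
    (e₁ - e₀) * (‖φ‖ ^ 2 - ‖⟪ψ, φ⟫_𝕜‖ ^ 2) ≤ (‖T‖ - e₀) * ‖d‖ ^ 2 := by
  set A : E →ₗ[𝕜] E := (T : E →ₗ[𝕜] E) - (e₀ : 𝕜) • LinearMap.id
  have hA : A.IsSymmetric := hT.sub (LinearMap.IsSymmetric.id.smul (conj_ofReal e₀))
  have hAψ : A ψ = 0 := by simp [A, hTψ]
  have hA_re : ∀ x, re ⟪x, A x⟫_𝕜 = re ⟪x, T x⟫_𝕜 - e₀ * ‖x‖ ^ 2 := fun x => by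
    simp [A, inner_sub_right, inner_smul_right, inner_self_eq_norm_sq_to_K]
  have hvariational : ∀ x, (e₁ - e₀) * ‖x - ⟪ψ, x⟫_𝕜 • ψ‖ ^ 2 ≤ re ⟪x, A x⟫_𝕜 := fun x => by
    rw [← hA.re_inner_map_sub_smul_of_map_eq_zero hAψ x ⟪ψ, x⟫_𝕜, hA_re]
    linarith [hgap _ (inner_sub_inner_smul_eq_zero hψ x)]
  have hA_nonneg : ∀ x, 0 ≤ re ⟪x, A x⟫_𝕜 := fun x =>
    le_trans (mul_nonneg (sub_nonneg.2 he) (sq_nonneg _)) (hvariational x)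
  have hφd : ⟪φ - d, A φ⟫_𝕜 = 0 := by
    simp [A, inner_sub_right, inner_smul_right, hloc]
  have hd : re ⟪d, A d⟫_𝕜 = re ⟪φ, A φ⟫_𝕜 + re ⟪φ - d, A (φ - d)⟫_𝕜 := by
    simpa [hφd] using hA.re_inner_map_sub_sub φ (φ - d)
  calc (e₁ - e₀) * (‖φ‖ ^ 2 - ‖⟪ψ, φ⟫_𝕜‖ ^ 2)
      = (e₁ - e₀) * ‖φ - ⟪ψ, φ⟫_𝕜 • ψ‖ ^ 2 := by rw [norm_sub_inner_smul_sq hψ]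
    _ ≤ re ⟪φ, A φ⟫_𝕜 := hvariational φ
    _ ≤ re ⟪d, A d⟫_𝕜 := by linarith [hA_nonneg (φ - d)]
    _ ≤ (‖T‖ - e₀) * ‖d‖ ^ 2 := by
      rw [hA_re, sub_mul]
      linarith [re_inner_apply_self_le_opNorm T d]

end Variational

namespace OrthonormalBasis

variable {𝕜 E ι : Type*} [RCLike 𝕜] [NormedAddCommGroup E] [InnerProductSpace 𝕜 E] [Fintype ι]
  {T : E →ₗ[𝕜] E} {b : OrthonormalBasis ι 𝕜 E} {μ : ι → ℝ}

lemma inner_map_of_eigenbasis (hT : T.IsSymmetric) (hb : ∀ i, T (b i) = (μ i : 𝕜) • b i)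
    (i : ι) (x : E) : ⟪b i, T x⟫_𝕜 = μ i * ⟪b i, x⟫_𝕜 := by
  rw [← hT, hb, inner_smul_left, conj_ofReal]

lemma re_inner_map_self_of_eigenbasis (hT : T.IsSymmetric) (hb : ∀ i, T (b i) = (μ i : 𝕜) • b i)
    (x : E) : re ⟪x, T x⟫_𝕜 = ∑ i, μ i * ‖⟪b i, x⟫_𝕜‖ ^ 2 := by
  rw [← b.sum_inner_mul_inner, map_sum]
  refine Finset.sum_congr rfl fun i _ => ?_
  rw [inner_map_of_eigenbasis hT hb, ← inner_conj_symm, mul_left_comm, RCLike.conj_mul]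
  norm_cast

lemma mul_norm_sq_le_re_inner_map_self (hT : T.IsSymmetric)
    (hb : ∀ i, T (b i) = (μ i : 𝕜) • b i) {a : ℝ} {x : E}
    (ha : ∀ i, ⟪b i, x⟫_𝕜 ≠ 0 → a ≤ μ i) : a * ‖x‖ ^ 2 ≤ re ⟪x, T x⟫_𝕜 := by
  rw [re_inner_map_self_of_eigenbasis hT hb, ← b.sum_sq_norm_inner_right, Finset.mul_sum]
  refine Finset.sum_le_sum fun i _ => ?_
  by_cases hi : ⟪b i, x⟫_𝕜 = 0
  · simp [hi]
  · exact mul_le_mul_of_nonneg_right (ha i hi) (sq_nonneg _)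

lemma inner_eq_zero_of_eigenvector (hT : T.IsSymmetric) (hb : ∀ i, T (b i) = (μ i : 𝕜) • b i)
    {ψ : E} {e : ℝ} (hψ : T ψ = (e : 𝕜) • ψ) {i : ι} (hi : μ i ≠ e) : ⟪b i, ψ⟫_𝕜 = 0 := by
  have h := inner_map_of_eigenbasis hT hb i ψ
  rw [hψ, inner_smul_right] at h
  have : ((μ i : 𝕜) - e) * ⟪b i, ψ⟫_𝕜 = 0 := by linear_combination -h
  exact (mul_eq_zero.1 this).resolve_left (sub_ne_zero.2 (by exact_mod_cast hi))

/-- If `e₀ < e₁`, the eigenvector `ψ` is a multiple of `b i₀`, so `x ⟂ ψ` has no `b i₀`-component;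
if `e₀ = e₁`, every eigenvalue is at least `e₁`. -/
lemma mul_norm_sq_le_re_inner_map_self_of_inner_eq_zero (hT : T.IsSymmetric)
    (hb : ∀ i, T (b i) = (μ i : 𝕜) • b i) {ψ x : E} {e₀ e₁ : ℝ} {i₀ : ι}
    (hψ : T ψ = (e₀ : 𝕜) • ψ) (hψ0 : ψ ≠ 0) (he : e₀ ≤ e₁) (hi₀ : e₀ ≤ μ i₀)
    (hμ : ∀ i ≠ i₀, e₁ ≤ μ i) (hx : ⟪ψ, x⟫_𝕜 = 0) : e₁ * ‖x‖ ^ 2 ≤ re ⟪x, T x⟫_𝕜 := by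
  refine mul_norm_sq_le_re_inner_map_self hT hb fun i hxi => ?_
  obtain hi | rfl := ne_or_eq i i₀
  · exact hμ i hi
  obtain rfl | hlt := he.eq_or_lt
  · exact hi₀
  have hψj : ∀ j ≠ i, ⟪b j, ψ⟫_𝕜 = 0 := fun j hj =>
    inner_eq_zero_of_eigenvector hT hb hψ (hlt.trans_le (hμ j hj)).ne'
  have hψi : ⟪b i, ψ⟫_𝕜 ≠ 0 := by
    intro h
    refine hψ0 (norm_eq_zero.1 (pow_eq_zero_iff two_ne_zero |>.1 ?_))
    rw [← b.sum_sq_norm_inner_right]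
    refine Finset.sum_eq_zero fun j _ => ?_
    by_cases hj : j = i
    · simp [hj, h]
    · simp [hψj j hj]
  have hψx : ⟪ψ, x⟫_𝕜 = conj ⟪b i, ψ⟫_𝕜 * ⟪b i, x⟫_𝕜 := by
    rw [← b.sum_inner_mul_inner, Finset.sum_eq_single i (fun j _ hj => by
      rw [← inner_conj_symm, hψj j hj, map_zero, zero_mul]) (by simp), inner_conj_symm]
  rw [hx, eq_comm, mul_eq_zero, map_eq_zero] at hψx
  exact absurd (hψx.resolve_left hψi) hxi

end OrthonormalBasis

lemma Matrix.IsHermitian.toEuclideanCLM_eigenvectorBasis {𝕜 B : Type*} [RCLike 𝕜] [Fintype B]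
    [DecidableEq B] {H : Matrix B B 𝕜} (hH : H.IsHermitian) (j : B) :
    toEuclideanCLM (𝕜 := 𝕜) H (hH.eigenvectorBasis j) =
      (hH.eigenvalues j : 𝕜) • hH.eigenvectorBasis j := by
  ext i
  simp [hH.mulVec_eigenvectorBasis]

section Indicator

variable {B : Type*} [Fintype B]

lemma inner_toLp_indicator {𝕜 : Type*} [RCLike 𝕜] (ψ : B → 𝕜) (s : Set B) :
    ⟪toLp 2 ψ, toLp 2 (s.indicator ψ)⟫_𝕜 =
      ⟪toLp 2 (s.indicator ψ), toLp 2 (s.indicator ψ)⟫_𝕜 := by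
  rw [PiLp.inner_apply, PiLp.inner_apply]
  refine Finset.sum_congr rfl fun z _ => ?_
  by_cases hz : z ∈ s <;> simp [hz]

lemma norm_toLp_indicator_sq (ψ : B → ℂ) (S : Finset B) :
    ‖toLp 2 ((S : Set B).indicator ψ)‖ ^ 2 = piS ψ S := by
  rw [EuclideanSpace.norm_sq_eq, piS, ← Finset.sum_indicator_subset _ S.subset_univ]
  refine Finset.sum_congr rfl fun z _ => ?_
  by_cases hz : z ∈ S <;> simp [hz]

open scoped Classical in
lemma mem_bdry {H : Matrix B B ℂ} {S : Finset B} {x : B} :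
    x ∈ bdry H S ↔ x ∈ S ∧ ∃ y ∉ S, H x y ≠ 0 :=
  Finset.mem_filter

lemma mulVec_indicator_apply_of_notMem_bdry (H : Matrix B B ℂ) (ψ : B → ℂ) {S : Finset B}
    {z : B} (hzS : z ∈ S) (hz : z ∉ bdry H S) :
    (H *ᵥ (S : Set B).indicator ψ) z = (H *ᵥ ψ) z := by
  refine Finset.sum_congr rfl fun y _ => ?_
  by_cases hy : y ∈ S
  · simp [hy]
  · have : H z y = 0 := by
      by_contra h
      exact hz (mem_bdry.2 ⟨hzS, y, hy, h⟩)
    simp [this]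

lemma inner_indicator_sub_indicator_bdry_toEuclideanCLM [DecidableEq B] {H : Matrix B B ℂ}
    {ψ : B → ℂ} {e : ℝ} (hψ : H *ᵥ ψ = (e : ℂ) • ψ) (S : Finset B) :
    ⟪toLp 2 ((S : Set B).indicator ψ) - toLp 2 ((bdry H S : Set B).indicator ψ),
        toEuclideanCLM (𝕜 := ℂ) H (toLp 2 ((S : Set B).indicator ψ))⟫_ℂ =
      e * ⟪toLp 2 ((S : Set B).indicator ψ) - toLp 2 ((bdry H S : Set B).indicator ψ),
        toLp 2 ((S : Set B).indicator ψ)⟫_ℂ := by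
  simp only [PiLp.inner_apply, Finset.mul_sum]
  refine Finset.sum_congr rfl fun z _ => ?_
  by_cases hzS : z ∈ S
  · by_cases hzb : z ∈ bdry H S
    · simp [hzS, hzb]
    · simp [hzS, hzb, mulVec_indicator_apply_of_notMem_bdry H ψ hzS hzb, hψ, mul_assoc,
        RCLike.mul_conj]
  · simp [hzS, mt (fun hzb => (mem_bdry.1 hzb).1) hzS]

end Indicator

theorem stmt_0_general {B : Type*} [Fintype B] [DecidableEq B]
    (H : Matrix B B ℂ) (hH : H.IsHermitian)
    -- `E` enumerates the eigenvalues of `H` (with multiplicity) in increasing order: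
    (E : ℕ → ℝ) (hmono : Monotone E)
    (henum : ∃ σ : Fin (Fintype.card B) ≃ B,
      ∀ i : Fin (Fintype.card B), E i = hH.eigenvalues (σ i))
    -- `ψ` is a unit-norm ground state:
    (ψ : B → ℂ) (hψnorm : ∑ z, ‖ψ z‖ ^ 2 = 1)
    (hground : H.mulVec ψ = (E 0 : ℂ) • ψ)
    (S : Finset B) (hS0 : 0 < piS ψ S) (hS12 : piS ψ S ≤ 1 / 2) :
    E 1 - E 0 ≤ 2 * (opNorm H - E 0) * (piS ψ (bdry H S) / piS ψ S) := by
  obtain ⟨σ, hσ⟩ := henum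
  set T := toEuclideanCLM (𝕜 := ℂ) H
  have hT : (T : EuclideanSpace ℂ B →ₗ[ℂ] _).IsSymmetric := isSymmetric_toEuclideanLin_iff.2 hH
  have hψ : ‖toLp 2 ψ‖ = 1 := by simp [EuclideanSpace.norm_eq, hψnorm]
  have hTψ : T (toLp 2 ψ) = (E 0 : ℂ) • toLp 2 ψ := by simp [T, hground]
  have hE : E 0 ≤ E 1 := hmono zero_le_one
  obtain ⟨z, -⟩ := Finset.nonempty_of_sum_ne_zero hS0.ne'
  let i₀ : Fin (Fintype.card B) := ⟨0, Fintype.card_pos_iff.2 ⟨z⟩⟩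
  have hE₀ : E 0 = hH.eigenvalues (σ i₀) := hσ i₀
  have hE₁ : ∀ j ≠ σ i₀, E 1 ≤ hH.eigenvalues j := fun j hj => by
    rw [← σ.apply_symm_apply j, ← hσ]
    refine hmono (Nat.one_le_iff_ne_zero.2 fun h => hj ?_)
    rw [← σ.apply_symm_apply j, show σ.symm j = i₀ from Fin.ext h]
  have key := gap_mul_variance_le T hT hψ hTψ hE
    (fun x hx => OrthonormalBasis.mul_norm_sq_le_re_inner_map_self_of_inner_eq_zero hT
      hH.toEuclideanCLM_eigenvectorBasis hTψ (norm_ne_zero_iff.1 (by simp [hψ])) hE hE₀.le hE₁ hx)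
    (inner_indicator_sub_indicator_bdry_toEuclideanCLM hground S)
  rw [inner_toLp_indicator, inner_self_eq_norm_sq_to_K, norm_pow, RCLike.norm_ofReal, abs_norm,
    norm_toLp_indicator_sq, norm_toLp_indicator_sq] at key
  change (E 1 - E 0) * (piS ψ S - piS ψ S ^ 2) ≤ (opNorm H - E 0) * piS ψ (bdry H S) at key
  rw [← mul_div_assoc, le_div_iff₀ hS0]
  nlinarith [mul_nonneg (mul_nonneg (sub_nonneg.2 hE) hS0.le) (sub_nonneg.2 hS12)]

/-- Theorem 1 of the paper: the spectral gap is bounded above by twice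
`(‖H‖ - E₀)` times the vertex-expansion ratio `π(∂S)/π(S)` of any set `S`
with `0 < π(S) ≤ 1/2`. -/
theorem stmt_0 {B : Type*} [Fintype B] [DecidableEq B]
    (H : Matrix B B ℂ) (hH : H.IsHermitian) (hPSD : H.PosSemidef)
    -- `E` enumerates the eigenvalues of `H` (with multiplicity) in increasing order:
    (E : ℕ → ℝ) (hmono : Monotone E)
    (henum : ∃ σ : Fin (Fintype.card B) ≃ B,
      ∀ i : Fin (Fintype.card B), E i = hH.eigenvalues (σ i))
    -- `ψ` is a unit-norm ground state:
    (ψ : B → ℂ) (hψnorm : ∑ z, ‖ψ z‖ ^ 2 = 1)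
    (hground : H.mulVec ψ = (E 0 : ℂ) • ψ)
    (S : Finset B) (hS0 : 0 < piS ψ S) (hS12 : piS ψ S ≤ 1 / 2) :
    E 1 - E 0 ≤ 2 * (opNorm H - E 0) * (piS ψ (bdry H S) / piS ψ S) :=
  stmt_0_general H hH E hmono henum ψ hψnorm hground S hS0 hS12
end

section
/- For every S ⊆ B with 0 < π(S) < 1, the quantity ⟨ψ| 1_S H 1_{B∖S} |ψ⟩ is a real number and the spectral gap satisfies Δ_H ≤ (−⟨ψ| 1_S H 1_{B∖S} |ψ⟩)/(π(S)·π(B∖S)). -/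
open scoped BigOperators ComplexOrder

/-!
Write `ψ = v + w` with `v = 1_S ψ`, `w = 1_{B∖S} ψ`, `p = ‖v‖² = π(S)`, `q = ‖w‖² = π(B∖S)`,
and evaluate the quadratic form of `H` at `u = q v - p w = 1_S ψ - π(S) ψ`.
Then `u ⟂ ψ` and `‖u‖² = p q`, and since `H ψ = E₀ ψ`, the form collapses to
`⟨u, H u⟩ = E₀ p q - ⟨v, H w⟩`, where `⟨v, H w⟩ = E₀ p - ⟨v, H v⟩` is real.
Finally `⟨u, H u⟩ ≥ E₁ ‖u‖²` for every `u ⟂ ψ`: in an orthonormal eigenbasis at most one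
basis vector has eigenvalue below `E₁`, and if one does, it spans the line of `ψ`.
-/

open scoped InnerProductSpace ComplexConjugate

section Orthogonal

variable {𝕜 E : Type*} [RCLike 𝕜] [NormedAddCommGroup E] [InnerProductSpace 𝕜 E] {v w : E}

lemma inner_add_smul_sub_smul_eq_zero (hvw : ⟪v, w⟫_𝕜 = 0) :
    ⟪v + w, ((‖w‖ ^ 2 : ℝ) : 𝕜) • v - ((‖v‖ ^ 2 : ℝ) : 𝕜) • w⟫_𝕜 = 0 := by
  rw [inner_add_left, inner_sub_right, inner_sub_right, inner_smul_right, inner_smul_right,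
    inner_smul_right, inner_smul_right, hvw, inner_eq_zero_symm.mp hvw,
    inner_self_eq_norm_sq_to_K, inner_self_eq_norm_sq_to_K]
  push_cast
  ring

lemma norm_sq_smul_sub_smul (hvw : ⟪v, w⟫_𝕜 = 0) :
    ‖((‖w‖ ^ 2 : ℝ) : 𝕜) • v - ((‖v‖ ^ 2 : ℝ) : 𝕜) • w‖ ^ 2 =
      ‖v‖ ^ 2 * ‖w‖ ^ 2 * (‖v‖ ^ 2 + ‖w‖ ^ 2) := by
  rw [@norm_sub_sq 𝕜, inner_smul_left, inner_smul_right, hvw, norm_smul, norm_smul]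
  simp only [mul_zero, map_zero, RCLike.norm_ofReal, abs_pow, abs_norm]
  ring

lemma inner_apply_eq_of_apply_add_eq_smul {T : E →ₗ[𝕜] E} {e : ℝ} (hvw : ⟪v, w⟫_𝕜 = 0)
    (h : T (v + w) = (e : 𝕜) • (v + w)) :
    ⟪v, T w⟫_𝕜 = ((e * ‖v‖ ^ 2 : ℝ) : 𝕜) - ⟪v, T v⟫_𝕜 := by
  have hTw : T w = (e : 𝕜) • (v + w) - T v := by rw [← h, map_add]; abel
  rw [hTw, inner_sub_right, inner_smul_right, inner_add_right, hvw, inner_self_eq_norm_sq_to_K]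
  push_cast
  ring

end Orthogonal

namespace LinearMap.IsSymmetric

variable {𝕜 E ι : Type*} [RCLike 𝕜] [NormedAddCommGroup E] [InnerProductSpace 𝕜 E]
  {T : E →ₗ[𝕜] E}

lemma inner_eq_zero_of_eigenvalue_ne (hT : T.IsSymmetric) {x y : E} {μ ν : ℝ}
    (hx : T x = (μ : 𝕜) • x) (hy : T y = (ν : 𝕜) • y) (hne : μ ≠ ν) : ⟪x, y⟫_𝕜 = 0 := by
  have h : (μ : 𝕜) * ⟪x, y⟫_𝕜 = ν * ⟪x, y⟫_𝕜 := by
    rw [← RCLike.conj_ofReal μ, ← inner_smul_left, ← hx, hT, hy, inner_smul_right]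
  exact (mul_eq_mul_right_iff.mp h).resolve_left (by exact_mod_cast hne)

section SplitGroundState

variable {v w : E} {e : ℝ}

lemma im_inner_apply_eq_zero_of_apply_add_eq_smul (hT : T.IsSymmetric) (hvw : ⟪v, w⟫_𝕜 = 0)
    (h : T (v + w) = (e : 𝕜) • (v + w)) : RCLike.im ⟪v, T w⟫_𝕜 = 0 := by
  rw [inner_apply_eq_of_apply_add_eq_smul hvw h, map_sub, RCLike.ofReal_im,
    hT.im_inner_self_apply, sub_zero]

lemma re_inner_smul_sub_smul_apply (hT : T.IsSymmetric) (hvw : ⟪v, w⟫_𝕜 = 0)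
    (h : T (v + w) = (e : 𝕜) • (v + w)) (hnorm : ‖v‖ ^ 2 + ‖w‖ ^ 2 = 1) :
    RCLike.re ⟪((‖w‖ ^ 2 : ℝ) : 𝕜) • v - ((‖v‖ ^ 2 : ℝ) : 𝕜) • w,
      T (((‖w‖ ^ 2 : ℝ) : 𝕜) • v - ((‖v‖ ^ 2 : ℝ) : 𝕜) • w)⟫_𝕜 =
      e * (‖v‖ ^ 2 * ‖w‖ ^ 2) - RCLike.re ⟪v, T w⟫_𝕜 := by
  have hwTv : ⟪w, T v⟫_𝕜 = ⟪v, T w⟫_𝕜 := by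
    rw [← hT, ← inner_conj_symm, RCLike.conj_eq_iff_im]
    exact hT.im_inner_apply_eq_zero_of_apply_add_eq_smul hvw h
  have hvTv := inner_apply_eq_of_apply_add_eq_smul hvw h
  have hwTw := inner_apply_eq_of_apply_add_eq_smul (inner_eq_zero_symm.mp hvw) (add_comm v w ▸ h)
  rw [hwTv] at hwTw
  have hnorm' : (‖v‖ : 𝕜) ^ 2 + (‖w‖ : 𝕜) ^ 2 = 1 := by exact_mod_cast hnorm
  have hquad : ⟪((‖w‖ ^ 2 : ℝ) : 𝕜) • v - ((‖v‖ ^ 2 : ℝ) : 𝕜) • w,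
      T (((‖w‖ ^ 2 : ℝ) : 𝕜) • v - ((‖v‖ ^ 2 : ℝ) : 𝕜) • w)⟫_𝕜 =
      ((e * (‖v‖ ^ 2 * ‖w‖ ^ 2) : ℝ) : 𝕜) - ⟪v, T w⟫_𝕜 := by
    rw [map_sub, map_smul, map_smul]
    simp only [inner_sub_left, inner_sub_right, inner_smul_left, inner_smul_right,
      RCLike.conj_ofReal, hwTv]
    push_cast at hvTv hwTw ⊢
    linear_combination (‖w‖ : 𝕜) ^ 4 * hvTv + (‖v‖ : 𝕜) ^ 4 * hwTw +
      ((e : 𝕜) * (‖v‖ : 𝕜) ^ 2 * (‖w‖ : 𝕜) ^ 2 -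
        ⟪v, T w⟫_𝕜 * ((‖v‖ : 𝕜) ^ 2 + (‖w‖ : 𝕜) ^ 2 + 1)) * hnorm'
  rw [hquad, map_sub, RCLike.ofReal_re]

end SplitGroundState

section Eigenbasis

variable [Fintype ι] {b : OrthonormalBasis ι 𝕜 E} {μ : ι → ℝ}

lemma inner_self_apply_eq_sum (hT : T.IsSymmetric) (hb : ∀ j, T (b j) = (μ j : 𝕜) • b j)
    (u : E) : ⟪u, T u⟫_𝕜 = ((∑ j, μ j * ‖⟪b j, u⟫_𝕜‖ ^ 2 : ℝ) : 𝕜) := by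
  rw [← b.sum_inner_mul_inner]
  push_cast
  refine Finset.sum_congr rfl fun j _ => ?_
  rw [← hT, hb, inner_smul_left, RCLike.conj_ofReal, ← inner_conj_symm u, ← RCLike.conj_mul]
  ring

lemma mul_norm_sq_le_re_inner_self_apply (hT : T.IsSymmetric)
    (hb : ∀ j, T (b j) = (μ j : 𝕜) • b j) {c : ℝ} {u : E}
    (hu : ∀ j, μ j < c → ⟪b j, u⟫_𝕜 = 0) : c * ‖u‖ ^ 2 ≤ RCLike.re ⟪u, T u⟫_𝕜 := by
  rw [hT.inner_self_apply_eq_sum hb, RCLike.ofReal_re, ← b.sum_sq_norm_inner_right,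
    Finset.mul_sum]
  refine Finset.sum_le_sum fun j _ => ?_
  rcases lt_or_ge (μ j) c with h | h
  · simp [hu j h]
  · exact mul_le_mul_of_nonneg_right h (by positivity)

lemma mul_norm_sq_le_re_inner_self_apply_of_inner_eq_zero (hT : T.IsSymmetric)
    (hb : ∀ j, T (b j) = (μ j : 𝕜) • b j) {e₀ e₁ : ℝ} (hmin : ∀ j, e₀ ≤ μ j)
    (hlow : ∀ j k, μ j < e₁ → μ k < e₁ → j = k) {ψ : E} (hψ : ψ ≠ 0)
    (hψT : T ψ = (e₀ : 𝕜) • ψ) {u : E} (hu : ⟪ψ, u⟫_𝕜 = 0) :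
    e₁ * ‖u‖ ^ 2 ≤ RCLike.re ⟪u, T u⟫_𝕜 := by
  refine hT.mul_norm_sq_le_re_inner_self_apply hb fun j hj => ?_
  have hψ_eq : ψ = ⟪b j, ψ⟫_𝕜 • b j := by
    refine (b.sum_repr' ψ).symm.trans (Finset.sum_eq_single j (fun k _ hk => ?_) (by simp))
    by_contra h
    have hμk : μ k = e₀ :=
      by_contra fun hne => h <| by rw [hT.inner_eq_zero_of_eigenvalue_ne (hb k) hψT hne, zero_smul]
    exact hk (hlow k j (by linarith [hmin j]) hj)
  have hψj : ⟪b j, ψ⟫_𝕜 ≠ 0 := fun h => hψ (by rw [hψ_eq, h, zero_smul])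
  rw [hψ_eq, inner_smul_left] at hu
  exact (mul_eq_zero.mp hu).resolve_left ((map_ne_zero _).mpr hψj)

lemma sub_mul_le_neg_re_inner_apply (hT : T.IsSymmetric) (hb : ∀ j, T (b j) = (μ j : 𝕜) • b j)
    {e₀ e₁ : ℝ} (hmin : ∀ j, e₀ ≤ μ j) (hlow : ∀ j k, μ j < e₁ → μ k < e₁ → j = k)
    {v w : E} (hvw : ⟪v, w⟫_𝕜 = 0) (h : T (v + w) = (e₀ : 𝕜) • (v + w))
    (hnorm : ‖v‖ ^ 2 + ‖w‖ ^ 2 = 1) :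
    (e₁ - e₀) * (‖v‖ ^ 2 * ‖w‖ ^ 2) ≤ -RCLike.re ⟪v, T w⟫_𝕜 := by
  have hψ : v + w ≠ 0 := fun h0 => by
    have := norm_add_sq_eq_norm_sq_add_norm_sq_of_inner_eq_zero v w hvw
    rw [h0, norm_zero] at this
    nlinarith
  have hgap := hT.mul_norm_sq_le_re_inner_self_apply_of_inner_eq_zero hb hmin hlow hψ h
    (inner_add_smul_sub_smul_eq_zero hvw)
  rw [norm_sq_smul_sub_smul hvw, hnorm, mul_one, hT.re_inner_smul_sub_smul_apply hvw h hnorm]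
    at hgap
  linarith

end Eigenbasis

end LinearMap.IsSymmetric

section Enumeration

variable {ι : Type*} {n : ℕ} {E : ℕ → ℝ} {f : ι → ℝ} {σ : Fin n ≃ ι}

lemma apply_zero_le_of_enumerates (hE : Monotone E) (hσ : ∀ i : Fin n, E i = f (σ i)) (j : ι) :
    E 0 ≤ f j := by
  rw [← σ.apply_symm_apply j, ← hσ]
  exact hE (Nat.zero_le _)

lemma eq_of_lt_apply_one_of_enumerates (hE : Monotone E) (hσ : ∀ i : Fin n, E i = f (σ i))
    {j k : ι} (hj : f j < E 1) (hk : f k < E 1) : j = k := by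
  have hzero : ∀ j, f j < E 1 → (σ.symm j : ℕ) = 0 := fun j hj => by
    by_contra h
    rw [← σ.apply_symm_apply j, ← hσ] at hj
    exact (hE (Nat.one_le_iff_ne_zero.mpr h)).not_gt hj
  exact σ.symm.injective (Fin.ext ((hzero j hj).trans (hzero k hk).symm))

end Enumeration

section HermitianMatrix

variable {𝕜 B : Type*} [RCLike 𝕜] [Fintype B] [DecidableEq B]

lemma Matrix.IsHermitian.toEuclideanLin_eigenvectorBasis {H : Matrix B B 𝕜}
    (hH : H.IsHermitian) (j : B) :
    Matrix.toEuclideanLin H (hH.eigenvectorBasis j) =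
      (hH.eigenvalues j : 𝕜) • hH.eigenvectorBasis j := by
  rw [Matrix.toLpLin_apply, hH.mulVec_eigenvectorBasis, WithLp.toLp_smul, WithLp.toLp_ofLp,
    RCLike.real_smul_eq_coe_smul (K := 𝕜)]

variable (S : Finset B) (ψ : B → 𝕜)

lemma toLp_piecewise_add_toLp_piecewise_compl :
    WithLp.toLp 2 (S.piecewise ψ 0) + WithLp.toLp 2 (Sᶜ.piecewise ψ 0) = WithLp.toLp 2 ψ := by
  ext z
  by_cases hz : z ∈ S <;> simp [hz]

lemma inner_toLp_piecewise_compl :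
    ⟪WithLp.toLp 2 (S.piecewise ψ 0), WithLp.toLp 2 (Sᶜ.piecewise ψ 0)⟫_𝕜 = 0 := by
  refine Finset.sum_eq_zero fun z _ => ?_
  by_cases hz : z ∈ S <;> simp [hz]

lemma inner_toLp_piecewise_toEuclideanLin (H : Matrix B B 𝕜) (X Y : Finset B) :
    ⟪WithLp.toLp 2 (X.piecewise ψ 0),
      Matrix.toEuclideanLin H (WithLp.toLp 2 (Y.piecewise ψ 0))⟫_𝕜 =
      ∑ x ∈ X, ∑ y ∈ Y, conj (ψ x) * H x y * ψ y := by
  simp only [Matrix.toLpLin_apply, EuclideanSpace.inner_toLp_toLp, dotProduct, Matrix.mulVec,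
    Pi.star_apply, Finset.piecewise, Pi.zero_apply, apply_ite star, mul_ite, mul_zero, star_zero,
    Finset.sum_ite_mem, Finset.univ_inter, Finset.sum_mul]
  exact Finset.sum_congr rfl fun x _ => Finset.sum_congr rfl fun y _ => by
    rw [RCLike.star_def]
    ring

end HermitianMatrix

lemma norm_sq_toLp_piecewise {B : Type*} [Fintype B] [DecidableEq B] (S : Finset B)
    (ψ : B → ℂ) : ‖WithLp.toLp 2 (S.piecewise ψ 0)‖ ^ 2 = piS ψ S := by
  rw [EuclideanSpace.norm_sq_eq, piS]
  simp [Finset.piecewise, apply_ite]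

/-- Theorem 3 of the paper (Hamiltonian conductance upper bound): for any `S` with
`0 < π(S) < 1`, the quantity `⟨ψ|1_S H 1_{B∖S}|ψ⟩` is real, and
`Δ_H ≤ -⟨ψ|1_S H 1_{B∖S}|ψ⟩ / (π(S)π(B∖S))`. -/
theorem stmt_2 {B : Type*} [Fintype B] [DecidableEq B]
    (H : Matrix B B ℂ) (hH : H.IsHermitian)
    -- `E` enumerates the eigenvalues of `H` (with multiplicity) in increasing order:
    (E : ℕ → ℝ) (hmono : Monotone E)
    (henum : ∃ σ : Fin (Fintype.card B) ≃ B,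
      ∀ i : Fin (Fintype.card B), E i = hH.eigenvalues (σ i))
    -- `ψ` is a unit-norm ground state:
    (ψ : B → ℂ) (hψnorm : ∑ z, ‖ψ z‖ ^ 2 = 1)
    (hground : H.mulVec ψ = (E 0 : ℂ) • ψ)
    (S : Finset B) (hS0 : 0 < piS ψ S) (hS1 : piS ψ S < 1) :
    (∑ x ∈ S, ∑ y ∈ Sᶜ, (starRingEnd ℂ) (ψ x) * H x y * ψ y).im = 0 ∧
    E 1 - E 0 ≤
      (-(∑ x ∈ S, ∑ y ∈ Sᶜ, (starRingEnd ℂ) (ψ x) * H x y * ψ y).re) /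
        (piS ψ S * piS ψ Sᶜ) := by
  obtain ⟨σ, hσ⟩ := henum
  have hT := Matrix.isSymmetric_toEuclideanLin_iff.mpr hH
  rw [← inner_toLp_piecewise_toEuclideanLin, ← norm_sq_toLp_piecewise,
    ← norm_sq_toLp_piecewise]
  set v := WithLp.toLp 2 (S.piecewise ψ 0)
  set w := WithLp.toLp 2 (Sᶜ.piecewise ψ 0)
  have hvw : ⟪v, w⟫_ℂ = 0 := inner_toLp_piecewise_compl S ψ
  have hvw_eig : Matrix.toEuclideanLin H (v + w) = (E 0 : ℂ) • (v + w) := by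
    rw [toLp_piecewise_add_toLp_piecewise_compl, Matrix.toLpLin_apply, WithLp.ofLp_toLp,
      hground, WithLp.toLp_smul]
  have hnorm : ‖v‖ ^ 2 + ‖w‖ ^ 2 = 1 := by
    rw [norm_sq_toLp_piecewise, norm_sq_toLp_piecewise, piS, piS, Finset.sum_add_sum_compl,
      hψnorm]
  have hv : ‖v‖ ^ 2 = piS ψ S := norm_sq_toLp_piecewise S ψ
  have hpq : 0 < ‖v‖ ^ 2 * ‖w‖ ^ 2 := mul_pos (hv ▸ hS0) (by linarith)
  refine ⟨hT.im_inner_apply_eq_zero_of_apply_add_eq_smul hvw hvw_eig, ?_⟩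
  rw [le_div_iff₀ hpq]
  exact hT.sub_mul_le_neg_re_inner_apply hH.toEuclideanLin_eigenvectorBasis
    (apply_zero_le_of_enumerates hmono hσ) (fun _ _ => eq_of_lt_apply_one_of_enumerates hmono hσ)
    hvw hvw_eig hnorm
end

section
/- Let S₀, S₁, …, S_k ⊆ B be pairwise isolated subsets with 0 < π(S_i) < 1 for every i. Then E_k − E₀ ≤ max_{i=0,…,k} (−⟨ψ| 1_{S_i} H 1_{B∖S_i} |ψ⟩)/(π(S_i)·π(B∖S_i)). -/
/-!
The vectors `1_{S_i} ψ` are pairwise orthogonal and, the `S_i` being isolated, the quadratic form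
of `H` is diagonal on their `(k + 1)`-dimensional span. Splitting `ψ = 1_S ψ + 1_{B∖S} ψ` in
`Hψ = E₀ψ` gives `⟨1_S ψ, H 1_S ψ⟩ = E₀ π(S) - ⟨ψ|1_S H 1_{B∖S}|ψ⟩`, where the last term is
nonpositive because `E₀` is the least eigenvalue. So on that span the Rayleigh quotient of `H` is at
most `E₀ + max_i (-⟨ψ|1_{S_i} H 1_{B∖S_i}|ψ⟩) / π(S_i)`, which is at most `E₀` plus the claimed
maximum since `π(B∖S_i) ≤ 1`, and the min-max principle bounds `E_k` by it.
-/

open scoped BigOperators ComplexOrder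

open Finset Matrix Module Submodule
open scoped InnerProductSpace

section QuadraticForm

variable {𝕜 E ι : Type*} [RCLike 𝕜] [NormedAddCommGroup E] [InnerProductSpace 𝕜 E] [Fintype ι]
  (T : E →ₗ[𝕜] E) {v : ι → E}

theorem inner_sum_smul_map_sum_smul (hT : Pairwise fun i j => ⟪v i, T (v j)⟫_𝕜 = 0)
    (c : ι → 𝕜) :
    ⟪∑ i, c i • v i, T (∑ i, c i • v i)⟫_𝕜 = ∑ i, ((‖c i‖ ^ 2 : ℝ) : 𝕜) * ⟪v i, T (v i)⟫_𝕜 := by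
  simp only [map_sum, map_smul, sum_inner, inner_sum, inner_smul_left, inner_smul_right]
  refine sum_congr rfl fun i _ => ?_
  rw [sum_eq_single i (fun j _ hji => by simp [hT hji]) (by simp),
    ← mul_assoc, RCLike.mul_conj]
  push_cast
  rfl

theorem norm_sum_smul_sq (hv : Pairwise fun i j => ⟪v i, v j⟫_𝕜 = 0) (c : ι → 𝕜) :
    ‖∑ i, c i • v i‖ ^ 2 = ∑ i, ‖c i‖ ^ 2 * ‖v i‖ ^ 2 := by
  have h := congrArg RCLike.re (inner_sum_smul_map_sum_smul LinearMap.id hv c)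
  simpa only [LinearMap.id_apply, ← norm_sq_eq_re_inner, map_sum, RCLike.re_ofReal_mul] using h

variable {T}

theorem re_inner_map_le_of_mem_span (hT : Pairwise fun i j => ⟪v i, T (v j)⟫_𝕜 = 0)
    (hv : Pairwise fun i j => ⟪v i, v j⟫_𝕜 = 0) {μ : ℝ}
    (hμ : ∀ i, RCLike.re ⟪v i, T (v i)⟫_𝕜 ≤ μ * ‖v i‖ ^ 2) {w : E}
    (hw : w ∈ span 𝕜 (Set.range v)) :
    RCLike.re ⟪w, T w⟫_𝕜 ≤ μ * ‖w‖ ^ 2 := by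
  obtain ⟨c, rfl⟩ := (mem_span_range_iff_exists_fun 𝕜).mp hw
  rw [inner_sum_smul_map_sum_smul T hT, norm_sum_smul_sq hv, map_sum, mul_sum]
  gcongr with i
  rw [RCLike.re_ofReal_mul, mul_left_comm]
  exact mul_le_mul_of_nonneg_left (hμ i) (by positivity)

theorem le_re_inner_map_of_mem_span (hT : Pairwise fun i j => ⟪v i, T (v j)⟫_𝕜 = 0)
    (hv : Pairwise fun i j => ⟪v i, v j⟫_𝕜 = 0) {μ : ℝ}
    (hμ : ∀ i, μ * ‖v i‖ ^ 2 ≤ RCLike.re ⟪v i, T (v i)⟫_𝕜) {w : E}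
    (hw : w ∈ span 𝕜 (Set.range v)) :
    μ * ‖w‖ ^ 2 ≤ RCLike.re ⟪w, T w⟫_𝕜 := by
  obtain ⟨c, rfl⟩ := (mem_span_range_iff_exists_fun 𝕜).mp hw
  rw [inner_sum_smul_map_sum_smul T hT, norm_sum_smul_sq hv, map_sum, mul_sum]
  gcongr with i
  rw [RCLike.re_ofReal_mul, mul_left_comm]
  exact mul_le_mul_of_nonneg_left (hμ i) (by positivity)

end QuadraticForm

namespace Matrix.IsHermitian

variable {𝕜 B : Type*} [RCLike 𝕜] [Fintype B] [DecidableEq B] {H : Matrix B B 𝕜}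
  (hH : H.IsHermitian)

theorem toEuclideanLin_eigenvectorBasis_s3 (j : B) :
    toEuclideanLin H (hH.eigenvectorBasis j) = hH.eigenvalues j • hH.eigenvectorBasis j := by
  ext x
  exact congrFun (hH.mulVec_eigenvectorBasis j) x

theorem le_re_inner_of_mem_span_eigenvectorBasis {ι : Type*} [Fintype ι] {f : ι → B}
    (hf : Function.Injective f) {μ : ℝ} (hμ : ∀ i, μ ≤ hH.eigenvalues (f i))
    {w : EuclideanSpace 𝕜 B} (hw : w ∈ span 𝕜 (Set.range (hH.eigenvectorBasis ∘ f))) :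
    μ * ‖w‖ ^ 2 ≤ RCLike.re ⟪w, toEuclideanLin H w⟫_𝕜 := by
  have hv : Pairwise fun i j => ⟪hH.eigenvectorBasis (f i), hH.eigenvectorBasis (f j)⟫_𝕜 = 0 :=
    fun i j hij => hH.eigenvectorBasis.orthonormal.2 (hf.ne hij)
  refine le_re_inner_map_of_mem_span (fun i j hij => ?_) hv (fun i => ?_) hw
  · simp [toEuclideanLin_eigenvectorBasis_s3 hH, inner_smul_right_eq_smul, hv hij]
  · simpa [toEuclideanLin_eigenvectorBasis_s3 hH, inner_smul_right_eq_smul, RCLike.smul_re] using hμ i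

/-- Courant–Fischer, upper half: `W` meets the `(n - k)`-dimensional span of the eigenvectors
with eigenvalues `E k, …, E (n - 1)` nontrivially. -/
theorem le_of_finrank_eq_of_re_inner_le {E : ℕ → ℝ} (hmono : Monotone E)
    (σ : Fin (Fintype.card B) ≃ B) (hσ : ∀ i : Fin (Fintype.card B), E i = hH.eigenvalues (σ i))
    {k : ℕ} {W : Submodule 𝕜 (EuclideanSpace 𝕜 B)} (hW : finrank 𝕜 W = k + 1) {μ : ℝ}
    (hμ : ∀ w ∈ W, RCLike.re ⟪w, toEuclideanLin H w⟫_𝕜 ≤ μ * ‖w‖ ^ 2) :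
    E k ≤ μ := by
  let f : Fin (Fintype.card B - k) → B := fun i => σ ⟨k + i, by omega⟩
  have hf : Function.Injective f := fun i j hij => by
    simpa [f, Fin.ext_iff] using σ.injective hij
  set U := span 𝕜 (Set.range (hH.eigenvectorBasis ∘ f))
  have hU : finrank 𝕜 U = Fintype.card B - k := by
    rw [finrank_span_eq_card (hH.eigenvectorBasis.orthonormal.comp f hf).linearIndependent,
      Fintype.card_fin]
  obtain ⟨w, ⟨hwW, hwU⟩, hw⟩ : ∃ w ∈ W ⊓ U, w ≠ 0 := by
    refine exists_mem_ne_zero_of_ne_bot fun hWU => ?_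
    have := finrank_add_finrank_le_of_disjoint (disjoint_iff.mpr hWU)
    have := W.finrank_le
    rw [finrank_euclideanSpace] at *
    omega
  have hlow := hH.le_re_inner_of_mem_span_eigenvectorBasis hf (μ := E k)
    (fun i => by rw [← hσ]; exact hmono (by simp)) hwU
  exact le_of_mul_le_mul_right (hlow.trans (hμ w hwW)) (by positivity)

end Matrix.IsHermitian

theorem le_mul_of_div_mul_le {a p q M : ℝ} (ha : 0 ≤ a) (hp : 0 < p) (hq : 0 < q) (hq1 : q ≤ 1)
    (h : a / (p * q) ≤ M) : a ≤ M * p := by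
  have hM : 0 ≤ M := (div_nonneg ha (by positivity)).trans h
  calc a ≤ M * (p * q) := (div_le_iff₀ (by positivity)).mp h
    _ ≤ M * p := by gcongr; exact mul_le_of_le_one_right hp.le hq1

section GroundState

variable {B : Type*} [Fintype B] [DecidableEq B] (ψ : B → ℂ)

noncomputable def indicatorVec (S : Finset B) : EuclideanSpace ℂ B :=
  WithLp.toLp 2 ((S : Set B).indicator ψ)

theorem indicatorVec_add_compl (S : Finset B) :
    indicatorVec ψ S + indicatorVec ψ Sᶜ = WithLp.toLp 2 ψ := by
  rw [indicatorVec, indicatorVec, ← WithLp.toLp_add, coe_compl, Set.indicator_self_add_compl]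

theorem norm_indicatorVec_sq (S : Finset B) : ‖indicatorVec ψ S‖ ^ 2 = piS ψ S := by
  simp [EuclideanSpace.norm_sq_eq, indicatorVec, Set.indicator_apply, apply_ite, piS]

theorem inner_indicatorVec_of_disjoint {S S' : Finset B} (h : Disjoint S S') :
    ⟪indicatorVec ψ S, indicatorVec ψ S'⟫_ℂ = 0 := by
  refine sum_eq_zero fun x _ => ?_
  by_cases hx : x ∈ S
  · simp [indicatorVec, hx, disjoint_left.mp h hx]
  · simp [indicatorVec, Set.indicator_apply, hx]

theorem inner_indicatorVec_toEuclideanLin (H : Matrix B B ℂ) (S S' : Finset B) :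
    ⟪indicatorVec ψ S, toEuclideanLin H (indicatorVec ψ S')⟫_ℂ =
      ∑ x ∈ S, ∑ y ∈ S', (starRingEnd ℂ) (ψ x) * H x y * ψ y := by
  simp only [indicatorVec, toLpLin_toLp, EuclideanSpace.inner_toLp_toLp, dotProduct, toLin'_apply,
    mulVec, Pi.star_apply, Set.indicator_apply, mem_coe, apply_ite star, star_zero, mul_ite,
    mul_zero, sum_ite_mem, univ_inter, sum_mul]
  exact sum_congr rfl fun x _ => sum_congr rfl fun y _ => by rw [Complex.star_def]; ring

theorem inner_indicatorVec_toEuclideanLin_eq_zero {H : Matrix B B ℂ} {S S' : Finset B}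
    (h : ∀ x ∈ S, ∀ y ∈ S', H x y = 0) :
    ⟪indicatorVec ψ S, toEuclideanLin H (indicatorVec ψ S')⟫_ℂ = 0 := by
  rw [inner_indicatorVec_toEuclideanLin]
  exact sum_eq_zero fun x hx => sum_eq_zero fun y hy => by simp [h x hx y hy]

theorem indicatorVec_ne_zero {S : Finset B} (h : 0 < piS ψ S) : indicatorVec ψ S ≠ 0 :=
  fun h0 => h.ne' (by rw [← norm_indicatorVec_sq, h0, norm_zero, zero_pow two_ne_zero])

variable {ψ} {H : Matrix B B ℂ} {E₀ : ℝ}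

theorem piS_compl (hψ : ∑ z, ‖ψ z‖ ^ 2 = 1) (S : Finset B) :
    piS ψ Sᶜ = 1 - piS ψ S := by
  rw [← hψ, ← sum_add_sum_compl S, piS, piS, add_sub_cancel_left]

theorem inner_indicatorVec_toEuclideanLin_self (hψ : H *ᵥ ψ = (E₀ : ℂ) • ψ) (S : Finset B) :
    ⟪indicatorVec ψ S, toEuclideanLin H (indicatorVec ψ S)⟫_ℂ =
      ((E₀ * piS ψ S : ℝ) : ℂ) - ⟪indicatorVec ψ S, toEuclideanLin H (indicatorVec ψ Sᶜ)⟫_ℂ := by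
  have hTψ : toEuclideanLin H (WithLp.toLp 2 ψ) = (E₀ : ℂ) • WithLp.toLp 2 ψ := by
    rw [toLpLin_toLp, toLin'_apply, hψ, WithLp.toLp_smul]
  rw [eq_sub_iff_add_eq, ← inner_add_right, ← map_add, indicatorVec_add_compl, hTψ,
    ← indicatorVec_add_compl, inner_smul_right, inner_add_right, inner_self_eq_norm_sq_to_K]
  simp [← norm_indicatorVec_sq, inner_indicatorVec_of_disjoint ψ disjoint_compl_right]

theorem re_inner_indicatorVec_compl_nonpos (hH : H.IsHermitian)
    (hE₀ : ∀ x, E₀ ≤ hH.eigenvalues x) (hψ : H *ᵥ ψ = (E₀ : ℂ) • ψ) (S : Finset B) :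
    (⟪indicatorVec ψ S, toEuclideanLin H (indicatorVec ψ Sᶜ)⟫_ℂ).re ≤ 0 := by
  have h := hH.le_re_inner_of_mem_span_eigenvectorBasis Function.injective_id hE₀
    (w := indicatorVec ψ S) (by rw [Function.comp_id, ← hH.eigenvectorBasis.coe_toBasis,
      hH.eigenvectorBasis.toBasis.span_eq]; exact mem_top)
  rw [inner_indicatorVec_toEuclideanLin_self hψ, norm_indicatorVec_sq] at h
  simp only [RCLike.re_to_complex, Complex.sub_re, Complex.ofReal_re] at h
  linarith

theorem re_inner_indicatorVec_toEuclideanLin_le (hH : H.IsHermitian)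
    (hE₀ : ∀ x, E₀ ≤ hH.eigenvalues x) (hψ : H *ᵥ ψ = (E₀ : ℂ) • ψ)
    (hψnorm : ∑ z, ‖ψ z‖ ^ 2 = 1) {S : Finset B} (hS0 : 0 < piS ψ S) (hS1 : piS ψ S < 1) {M : ℝ}
    (hM : -(⟪indicatorVec ψ S, toEuclideanLin H (indicatorVec ψ Sᶜ)⟫_ℂ).re /
      (piS ψ S * piS ψ Sᶜ) ≤ M) :
    RCLike.re ⟪indicatorVec ψ S, toEuclideanLin H (indicatorVec ψ S)⟫_ℂ ≤
      (E₀ + M) * ‖indicatorVec ψ S‖ ^ 2 := by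
  have hπc := piS_compl hψnorm S
  have hcut := le_mul_of_div_mul_le
    (neg_nonneg.mpr (re_inner_indicatorVec_compl_nonpos hH hE₀ hψ S)) hS0
    (by linarith) (by linarith) hM
  rw [inner_indicatorVec_toEuclideanLin_self hψ, norm_indicatorVec_sq]
  simp only [RCLike.re_to_complex, Complex.sub_re, Complex.ofReal_re]
  linarith

end GroundState

theorem stmt_3_general {B : Type*} [Fintype B] [DecidableEq B]
    (H : Matrix B B ℂ) (hH : H.IsHermitian)
    -- `E` enumerates the eigenvalues of `H` (with multiplicity) in increasing order:
    (E : ℕ → ℝ) (hmono : Monotone E)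
    (henum : ∃ σ : Fin (Fintype.card B) ≃ B,
      ∀ i : Fin (Fintype.card B), E i = hH.eigenvalues (σ i))
    -- `ψ` is a unit-norm ground state:
    (ψ : B → ℂ) (hψnorm : ∑ z, ‖ψ z‖ ^ 2 = 1)
    (hground : H.mulVec ψ = (E 0 : ℂ) • ψ)
    -- the subsets `S 0, …, S k` are pairwise disjoint and isolated:
    (k : ℕ) (S : Fin (k + 1) → Finset B)
    (hdisj : ∀ i j, i ≠ j → Disjoint (S i) (S j))
    (hiso : ∀ i j, i ≠ j → ∀ x ∈ S i, ∀ y ∈ S j, H x y = 0)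
    (hS0 : ∀ i, 0 < piS ψ (S i)) (hS1 : ∀ i, piS ψ (S i) < 1) :
    E k - E 0 ≤
      Finset.univ.sup' Finset.univ_nonempty
        (fun i : Fin (k + 1) =>
          (-(∑ x ∈ S i, ∑ y ∈ (S i)ᶜ, (starRingEnd ℂ) (ψ x) * H x y * ψ y).re) /
            (piS ψ (S i) * piS ψ (S i)ᶜ)) := by
  obtain ⟨σ, hσ⟩ := henum
  have hE₀ : ∀ x, E 0 ≤ hH.eigenvalues x := fun x => by
    simpa [hσ] using hmono (Nat.zero_le (σ.symm x))
  have horth : Pairwise fun i j => ⟪indicatorVec ψ (S i), indicatorVec ψ (S j)⟫_ℂ = 0 :=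
    fun i j hij => inner_indicatorVec_of_disjoint ψ (hdisj i j hij)
  simp only [← inner_indicatorVec_toEuclideanLin]
  rw [sub_le_iff_le_add']
  refine hH.le_of_finrank_eq_of_re_inner_le hmono σ hσ
    (W := span ℂ (Set.range fun i => indicatorVec ψ (S i))) ?_ fun w hw =>
      re_inner_map_le_of_mem_span
        (fun i j hij => inner_indicatorVec_toEuclideanLin_eq_zero ψ (hiso i j hij)) horth
        (fun i => re_inner_indicatorVec_toEuclideanLin_le hH hE₀ hground hψnorm (hS0 i) (hS1 i)
          ((le_sup'_iff _).2 ⟨i, mem_univ i, le_rfl⟩)) hw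
  rw [finrank_span_eq_card (linearIndependent_of_ne_zero_of_inner_eq_zero
    (fun i => indicatorVec_ne_zero ψ (hS0 i)) horth), Fintype.card_fin]

/-- Conductance bound for higher eigenvalues: for pairwise isolated subsets
`S₀,…,S_k` with `0 < π(Sᵢ) < 1`,
`E_k - E₀ ≤ max_i (-⟨ψ|1_{Sᵢ} H 1_{B∖Sᵢ}|ψ⟩)/(π(Sᵢ)π(B∖Sᵢ))`. -/
theorem stmt_3 {B : Type*} [Fintype B] [DecidableEq B]
    (H : Matrix B B ℂ) (hH : H.IsHermitian) (hPSD : H.PosSemidef)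
    -- `E` enumerates the eigenvalues of `H` (with multiplicity) in increasing order:
    (E : ℕ → ℝ) (hmono : Monotone E)
    (henum : ∃ σ : Fin (Fintype.card B) ≃ B,
      ∀ i : Fin (Fintype.card B), E i = hH.eigenvalues (σ i))
    -- `ψ` is a unit-norm ground state:
    (ψ : B → ℂ) (hψnorm : ∑ z, ‖ψ z‖ ^ 2 = 1)
    (hground : H.mulVec ψ = (E 0 : ℂ) • ψ)
    -- the subsets `S 0, …, S k` are pairwise disjoint and isolated:
    (k : ℕ) (S : Fin (k + 1) → Finset B)
    (hdisj : ∀ i j, i ≠ j → Disjoint (S i) (S j))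
    (hiso : ∀ i j, i ≠ j → ∀ x ∈ S i, ∀ y ∈ S j, H x y = 0)
    (hS0 : ∀ i, 0 < piS ψ (S i)) (hS1 : ∀ i, piS ψ (S i) < 1) :
    E k - E 0 ≤
      Finset.univ.sup' Finset.univ_nonempty
        (fun i : Fin (k + 1) =>
          (-(∑ x ∈ S i, ∑ y ∈ (S i)ᶜ, (starRingEnd ℂ) (ψ x) * H x y * ψ y).re) /
            (piS ψ (S i) * piS ψ (S i)ᶜ)) :=
  stmt_3_general H hH E hmono henum ψ hψnorm hground k S hdisj hiso hS0 hS1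
end

section
/- For every S ⊆ B, the quantity ⟨ψ| 1_S H 1_{B∖S} |ψ⟩ = ∑_{x∈S, y∈B∖S} conj(ψ_x) H_{xy} ψ_y is a real number and is less than or equal to zero. -/
open scoped BigOperators ComplexOrder
open Matrix

theorem Matrix.IsHermitian.posSemidef_sub_smul_one {𝕜 n : Type*} [RCLike 𝕜] [Fintype n]
    [DecidableEq n] {A : Matrix n n 𝕜} (hA : A.IsHermitian) {c : ℝ}
    (hc : ∀ i, c ≤ hA.eigenvalues i) : (A - (c : 𝕜) • 1).PosSemidef := by
  have hAc : (A - (c : 𝕜) • 1).IsHermitian :=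
    hA.sub (isHermitian_one.smul (RCLike.conj_ofReal c))
  refine posSemidef_iff_isHermitian_and_spectrum_nonneg.mpr ⟨hAc, ?_⟩
  rw [← Algebra.algebraMap_eq_smul_one, ← spectrum.sub_singleton_eq, hA.spectrum_eq_image_range]
  rintro _ ⟨_, ⟨_, ⟨i, rfl⟩, rfl⟩, _, rfl, rfl⟩
  change 0 ≤ (hA.eigenvalues i : 𝕜) - (c : 𝕜)
  rw [← RCLike.ofReal_sub, RCLike.ofReal_nonneg, sub_nonneg]
  exact hc i

theorem Matrix.PosSemidef.dotProduct_mulVec_nonpos_of_mulVec_add_eq_zero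
    {n R : Type*} [Fintype n] [CommRing R] [PartialOrder R] [IsOrderedAddMonoid R] [StarRing R]
    {M : Matrix n n R} (hM : M.PosSemidef) {u w : n → R} (h : M *ᵥ (u + w) = 0) :
    star u ⬝ᵥ (M *ᵥ w) ≤ 0 := by
  have hw : M *ᵥ w = -(M *ᵥ u) := by
    rw [mulVec_add] at h; exact eq_neg_of_add_eq_zero_right h
  rw [hw, dotProduct_neg, neg_nonpos]
  exact hM.dotProduct_mulVec_nonneg u

theorem dotProduct_indicator_mulVec_indicator {n R : Type*} [Fintype n] [CommSemiring R]
    [StarRing R]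
    (A : Matrix n n R) (ψ : n → R) (S T : Finset n) :
    star ((S : Set n).indicator ψ) ⬝ᵥ (A *ᵥ (T : Set n).indicator ψ) =
      ∑ x ∈ S, ∑ y ∈ T, star (ψ x) * A x y * ψ y := by
  classical
  simp [dotProduct, mulVec, Set.indicator_apply, Finset.mul_sum, apply_ite star, ite_mul,
    Finset.sum_ite_mem, mul_assoc]

theorem dotProduct_indicator_indicator_compl {n R : Type*} [Fintype n] [CommSemiring R]
    [StarRing R]
    (ψ : n → R) (S : Set n) :
    star (S.indicator ψ) ⬝ᵥ Sᶜ.indicator ψ = 0 := by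
  classical
  refine Finset.sum_eq_zero fun x _ => ?_
  by_cases hx : x ∈ S <;> simp [hx]

theorem stmt_5_general {B : Type*} [Fintype B] [DecidableEq B]
    (H : Matrix B B ℂ) (hH : H.IsHermitian)
    -- `ψ` is a unit-norm eigenvector for the smallest eigenvalue `E₀`:
    (E₀ : ℝ) (ψ : B → ℂ)
    (hground : H.mulVec ψ = (E₀ : ℂ) • ψ)
    (hleast : ∀ i, E₀ ≤ hH.eigenvalues i)
    (S : Finset B) :
    (∑ x ∈ S, ∑ y ∈ Sᶜ, (starRingEnd ℂ) (ψ x) * H x y * ψ y).im = 0 ∧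
    (∑ x ∈ S, ∑ y ∈ Sᶜ, (starRingEnd ℂ) (ψ x) * H x y * ψ y).re ≤ 0 := by
  have hker :
      (H - (E₀ : ℂ) • 1) *ᵥ ((S : Set B).indicator ψ + (S : Set B)ᶜ.indicator ψ) = 0 := by
    rw [Set.indicator_self_add_compl, sub_mulVec, hground, smul_mulVec, one_mulVec, sub_self]
  have hcross :
      star ((S : Set B).indicator ψ) ⬝ᵥ ((H - (E₀ : ℂ) • 1) *ᵥ (S : Set B)ᶜ.indicator ψ) =
      ∑ x ∈ S, ∑ y ∈ Sᶜ, (starRingEnd ℂ) (ψ x) * H x y * ψ y := by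
    rw [sub_mulVec, dotProduct_sub, smul_mulVec, one_mulVec, dotProduct_smul,
      dotProduct_indicator_indicator_compl, smul_zero, sub_zero, ← Finset.coe_compl,
      dotProduct_indicator_mulVec_indicator]
    rfl
  have hnonpos := hcross ▸
    (hH.posSemidef_sub_smul_one hleast).dotProduct_mulVec_nonpos_of_mulVec_add_eq_zero hker
  exact (Complex.le_def.mp hnonpos).symm

/-- For the ground state `ψ` of a Hermitian matrix `H`, the quantity
`⟨ψ|1_S H 1_{B∖S}|ψ⟩` is real and non-positive, for every `S ⊆ B`. -/
theorem stmt_5 {B : Type*} [Fintype B] [DecidableEq B]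
    (H : Matrix B B ℂ) (hH : H.IsHermitian)
    -- `ψ` is a unit-norm eigenvector for the smallest eigenvalue `E₀`:
    (E₀ : ℝ) (ψ : B → ℂ) (hψnorm : ∑ z, ‖ψ z‖ ^ 2 = 1)
    (hground : H.mulVec ψ = (E₀ : ℂ) • ψ)
    (hleast : ∀ i, E₀ ≤ hH.eigenvalues i)
    (S : Finset B) :
    (∑ x ∈ S, ∑ y ∈ Sᶜ, (starRingEnd ℂ) (ψ x) * H x y * ψ y).im = 0 ∧
    (∑ x ∈ S, ∑ y ∈ Sᶜ, (starRingEnd ℂ) (ψ x) * H x y * ψ y).re ≤ 0 :=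
  stmt_5_general H hH E₀ ψ hground hleast S
end

section
/- Suppose H is stoquastic and irreducible in the basis B. Then the ground-state eigenspace of H contains a unit-norm eigenvector ψ with ψ_x > 0 (strictly positive real) for every x ∈ B. -/
/-!
Let `E₀` be the least eigenvalue and `v` a normalized ground state, so that `H - E₀` is positive
semidefinite and annihilates `v`. Since the off-diagonal entries of `H` are real and non-positive,
replacing `v` by its entrywise modulus `|v|` does not increase the quadratic form of `H - E₀`;
hence `|v|` is also a ground state. In the eigen-equation for `|v|` at a zero `x` of `|v|`, all
terms are non-positive, so `|v|` also vanishes at every neighbour of `x`; by irreducibility it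
would then vanish identically, contradicting normalization.
-/

open scoped BigOperators ComplexOrder

theorem SimpleGraph.Preconnected.forall_of_adj_closed {V : Type*} {G : SimpleGraph V}
    (hG : G.Preconnected) {p : V → Prop} (hp : ∀ x y, G.Adj x y → p x → p y) {x : V} (hx : p x)
    (y : V) : p y := by
  induction (G.reachable_iff_reflTransGen x y).1 (hG x y) with
  | refl => exact hx
  | tail _ hadj ih => exact hp _ _ hadj ih

namespace Matrix

section RCLike

variable {B 𝕜 : Type*} [Fintype B] [RCLike 𝕜]

lemma IsHermitian.posSemidef_sub_smul_one_s12 [DecidableEq B] {H : Matrix B B 𝕜} (hH : H.IsHermitian)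
    {E : ℝ} (hE : ∀ i, E ≤ hH.eigenvalues i) : (H - (E : 𝕜) • 1).PosSemidef := by
  refine posSemidef_iff_isHermitian_and_spectrum_nonneg.2
    ⟨hH.sub (isHermitian_one.smul (RCLike.conj_ofReal E)), ?_⟩
  rw [← Algebra.algebraMap_eq_smul_one, ← spectrum.sub_singleton_eq, hH.spectrum_eq_image_range]
  rintro _ ⟨_, ⟨_, ⟨i, rfl⟩, rfl⟩, _, rfl, rfl⟩
  simpa [sub_nonneg, RCLike.ofReal_le_ofReal] using hE i

lemma PosSemidef.mulVec_eq_zero_of_re_dotProduct_nonpos {A : Matrix B B 𝕜} (hA : A.PosSemidef)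
    {x : B → 𝕜} (hx : RCLike.re (star x ⬝ᵥ A *ᵥ x) ≤ 0) : A *ᵥ x = 0 := by
  have h := hA.dotProduct_mulVec_nonneg x
  rw [← hA.dotProduct_mulVec_zero_iff, ← RCLike.re_add_im (star x ⬝ᵥ A *ᵥ x),
    (RCLike.nonneg_iff.mp h).2, le_antisymm hx (RCLike.nonneg_iff.mp h).1]
  simp

end RCLike

variable {B : Type*}

lemma re_mulVec_ofReal_apply [Fintype B] {H : Matrix B B ℂ} (u : B → ℝ) (x : B) :
    ((H *ᵥ fun y => (u y : ℂ)) x).re = ∑ y, (H x y).re * u y := by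
  simp [mulVec, dotProduct, Complex.re_sum]

structure IsStoquastic (H : Matrix B B ℂ) : Prop where
  im_eq_zero : ∀ z z', (H z z').im = 0
  re_nonpos : ∀ z z', z ≠ z' → (H z z').re ≤ 0

namespace IsStoquastic

variable {H : Matrix B B ℂ}

lemma sub_smul_one [DecidableEq B] (hS : H.IsStoquastic) (E : ℝ) :
    (H - (E : ℂ) • 1).IsStoquastic where
  im_eq_zero z z' := by by_cases h : z = z' <;> simp [h, hS.im_eq_zero]
  re_nonpos z z' h := by simpa [h] using hS.re_nonpos z z' h

lemma eq_ofReal_re (hS : H.IsStoquastic) (z z' : B) : H z z' = ((H z z').re : ℂ) :=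
  Complex.ext rfl (hS.im_eq_zero z z')

lemma re_star_dotProduct_mulVec [Fintype B] (hS : H.IsStoquastic) (v : B → ℂ) :
    (star v ⬝ᵥ H *ᵥ v).re = ∑ x, ∑ y, (H x y).re * (star (v x) * v y).re := by
  simp only [dotProduct, mulVec, Finset.mul_sum, Complex.re_sum]
  refine Finset.sum_congr rfl fun x _ => Finset.sum_congr rfl fun y _ => ?_
  rw [hS.eq_ofReal_re x y, mul_left_comm, Complex.re_ofReal_mul, Complex.ofReal_re, Pi.star_apply]

lemma re_star_dotProduct_mulVec_norm_le [Fintype B] (hS : H.IsStoquastic) (v : B → ℂ) :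
    (star (fun x => (‖v x‖ : ℂ)) ⬝ᵥ H *ᵥ fun x => (‖v x‖ : ℂ)).re ≤ (star v ⬝ᵥ H *ᵥ v).re := by
  rw [hS.re_star_dotProduct_mulVec, hS.re_star_dotProduct_mulVec]
  refine Finset.sum_le_sum fun x _ => Finset.sum_le_sum fun y _ => ?_
  rcases eq_or_ne x y with rfl | hxy
  · simp [Complex.conj_mul', sq]
  · refine mul_le_mul_of_nonpos_left ?_ (hS.re_nonpos x y hxy)
    calc (star (v x) * v y).re ≤ ‖star (v x) * v y‖ := Complex.re_le_norm _
      _ = _ := by simp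

lemma eq_zero_of_mulVec_eq_smul [Fintype B] (hS : H.IsStoquastic) {u : B → ℝ} (hu : 0 ≤ u) {E : ℂ}
    (heig : (H *ᵥ fun y => (u y : ℂ)) = E • fun y => (u y : ℂ)) {x y : B} (hx : u x = 0)
    (hxy : H x y ≠ 0) : u y = 0 := by
  have hsum : ∑ z, (H x z).re * u z = 0 := by
    rw [← re_mulVec_ofReal_apply, heig]
    simp [hx]
  have hterm_nonpos : ∀ z ∈ Finset.univ, (H x z).re * u z ≤ 0 := fun z _ => by
    rcases eq_or_ne x z with rfl | hxz
    · simp [hx]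
    · exact mul_nonpos_of_nonpos_of_nonneg (hS.re_nonpos x z hxz) (hu z)
  have hre : (H x y).re ≠ 0 := fun h => hxy (by rw [hS.eq_ofReal_re, h, Complex.ofReal_zero])
  exact (mul_eq_zero.1 ((Finset.sum_eq_zero_iff_of_nonpos hterm_nonpos).1 hsum y
    (Finset.mem_univ y))).resolve_left hre

lemma mulVec_norm_eq_smul [Fintype B] [DecidableEq B] (hS : H.IsStoquastic) (hH : H.IsHermitian)
    {E : ℝ} (hE : ∀ i, E ≤ hH.eigenvalues i) {v : B → ℂ} (hv : H *ᵥ v = (E : ℂ) • v) :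
    (H *ᵥ fun x => (‖v x‖ : ℂ)) = (E : ℂ) • fun x => (‖v x‖ : ℂ) := by
  have hAv : (H - (E : ℂ) • 1) *ᵥ v = 0 := by
    rw [sub_mulVec, smul_mulVec, one_mulVec, hv, sub_self]
  have hAw := (hH.posSemidef_sub_smul_one_s12 hE).mulVec_eq_zero_of_re_dotProduct_nonpos
    (((hS.sub_smul_one E).re_star_dotProduct_mulVec_norm_le v).trans
      (by rw [hAv, dotProduct_zero, Complex.zero_re]))
  rwa [sub_mulVec, smul_mulVec, one_mulVec, sub_eq_zero] at hAw

lemma pos_of_mulVec_eq_smul [Fintype B] (hS : H.IsStoquastic) (hH : H.IsHermitian)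
    (hirr : (SimpleGraph.fromRel fun z z' : B => H z z' ≠ 0).Preconnected) {u : B → ℝ}
    (hu : 0 ≤ u) (hu0 : u ≠ 0) {E : ℂ}
    (heig : (H *ᵥ fun y => (u y : ℂ)) = E • fun y => (u y : ℂ)) (x : B) : 0 < u x := by
  refine (hu x).lt_of_ne' fun hx => hu0 (funext fun y => ?_)
  refine hirr.forall_of_adj_closed (p := fun z => u z = 0) ?_ hx y
  rintro z z' ⟨-, hzz' | hz'z⟩ hz
  · exact hS.eq_zero_of_mulVec_eq_smul hu heig hz hzz'
  · exact hS.eq_zero_of_mulVec_eq_smul hu heig hz (by rwa [← hH.apply, star_ne_zero])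

end IsStoquastic
end Matrix

/-- Perron–Frobenius for irreducible stoquastic Hamiltonians: the ground-state
eigenspace contains a unit-norm eigenvector with strictly positive real entries. -/
theorem stmt_12 {B : Type*} [Fintype B] [DecidableEq B]
    (H : Matrix B B ℂ) (hH : H.IsHermitian)
    -- `H` is stoquastic in the basis `B`: real entries, non-positive off the diagonal:
    (hreal : ∀ z z', (H z z').im = 0)
    (hstoq : ∀ z z', z ≠ z' → (H z z').re ≤ 0)
    -- `H` is irreducible:
    (hirr : (SimpleGraph.fromRel (fun z z' : B => H z z' ≠ 0)).Connected) :
    ∃ E₀ : ℝ, IsLeast (Set.range hH.eigenvalues) E₀ ∧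
      ∃ ψ : B → ℂ, H.mulVec ψ = (E₀ : ℂ) • ψ ∧ (∑ z, ‖ψ z‖ ^ 2 = 1) ∧
        ∀ x, (ψ x).im = 0 ∧ 0 < (ψ x).re := by
  have hS : H.IsStoquastic := ⟨hreal, hstoq⟩
  have : Nonempty B := hirr.nonempty
  obtain ⟨i₀, -, hmin⟩ := Finset.univ.exists_min_image hH.eigenvalues Finset.univ_nonempty
  set v : B → ℂ := ⇑(hH.eigenvectorBasis i₀)
  have hnorm : ∑ z, ‖v z‖ ^ 2 = 1 := by
    have := hH.eigenvectorBasis.orthonormal.1 i₀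
    rwa [EuclideanSpace.norm_eq, Real.sqrt_eq_one] at this
  have hv0 : (fun z => ‖v z‖) ≠ 0 := fun h => by simp [congrFun h] at hnorm
  have heig := hS.mulVec_norm_eq_smul hH (fun i => hmin i (Finset.mem_univ i))
    (hH.mulVec_eigenvectorBasis i₀)
  refine ⟨_, ⟨⟨i₀, rfl⟩, ?_⟩, _, heig, by simpa using hnorm, fun x => ⟨by simp, ?_⟩⟩
  · rintro _ ⟨i, rfl⟩
    exact hmin i (Finset.mem_univ i)
  · simpa using
      hS.pos_of_mulVec_eq_smul hH hirr.preconnected (fun z => norm_nonneg (v z)) hv0 heig x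
end

section
/- Suppose H is stoquastic and irreducible in the basis B, positive semidefinite with ‖H‖ > E₀, every non-zero off-diagonal entry of H has magnitude at least Γ > 0, and ψ is the strictly positive unit-norm ground state of H. Then for every pair x ≠ y with H_{xy} ≠ 0, ψ_y/ψ_x ≥ Γ/‖H‖, and consequently the quantity P_{xy} := (ψ_y/ψ_x)·(‖H‖δ_{xy} − H_{xy})/(‖H‖ − E₀) satisfies P_{xy} ≥ (Γ/‖H‖)². -/
open scoped BigOperators ComplexOrder

/-! The eigenvalue equation in row `y` has only non-positive off-diagonal terms, so dropping all
of them except the one at `x` gives `-H_{yx} ψ_x ≤ (H_{yy} - E₀) ψ_y`. With `H_{yx} = H_{xy}`,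
`-H_{xy} = |H_{xy}| ≥ Γ`, `H_{yy} ≤ ‖H‖` and `0 ≤ E₀` (positive semidefiniteness) this is
`Γ ψ_x ≤ ‖H‖ ψ_y`. The same bounds give `-H_{xy} / (‖H‖ - E₀) ≥ Γ / ‖H‖`, and `P_{xy}` is the product
of these two ratios. -/

open scoped Matrix

theorem norm_apply_le_opNorm {B : Type*} [Fintype B] [DecidableEq B] (H : Matrix B B ℂ)
    (i j : B) : ‖H i j‖ ≤ opNorm H := by
  set T := Matrix.toEuclideanCLM (𝕜 := ℂ) H
  have hinner : inner ℂ (EuclideanSpace.single i 1) (T (EuclideanSpace.single j 1)) = H i j := by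
    simp [T, EuclideanSpace.single, EuclideanSpace.inner_single_left, Matrix.mulVec_single]
  calc ‖H i j‖ ≤ ‖EuclideanSpace.single i (1 : ℂ)‖ * ‖T (EuclideanSpace.single j 1)‖ :=
        hinner ▸ norm_inner_le_norm _ _
    _ ≤ ‖T‖ := by simpa using T.le_opNorm (EuclideanSpace.single j 1)

theorem Matrix.PosSemidef.nonneg_of_mulVec_eq_smul {n 𝕜 : Type*} [Fintype n] [RCLike 𝕜]
    {M : Matrix n n 𝕜} (hM : M.PosSemidef) {v : n → 𝕜} (hv : v ≠ 0) {E : ℝ}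
    (h : M *ᵥ v = (E : 𝕜) • v) : 0 ≤ E := by
  have hquad := hM.dotProduct_mulVec_nonneg v
  rw [h, dotProduct_smul, smul_eq_mul] at hquad
  have hnorm := Matrix.dotProduct_star_self_pos_iff.mpr hv
  have hre := (RCLike.nonneg_iff.mp hquad).1
  rw [RCLike.re_ofReal_mul] at hre
  exact nonneg_of_mul_nonneg_left hre (RCLike.pos_iff.mp hnorm).1

theorem Matrix.re_mulVec_ofReal {m n : Type*} [Fintype n] (M : Matrix m n ℂ) (v : n → ℝ) (i : m) :
    ((M *ᵥ fun j => (v j : ℂ)) i).re = (M.map Complex.re *ᵥ v) i := by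
  simp [Matrix.mulVec, dotProduct, Complex.re_sum]

theorem Matrix.neg_apply_mul_le_of_mulVec_eq_smul {n : Type*} [Fintype n] [DecidableEq n]
    {A : Matrix n n ℝ} (hA : ∀ i j, i ≠ j → A i j ≤ 0) {v : n → ℝ} (hv : 0 ≤ v) {E : ℝ}
    (h : A *ᵥ v = E • v) {x y : n} (hxy : x ≠ y) : -A y x * v x ≤ (A y y - E) * v y := by
  have hrow : A y y * v y + ∑ z ∈ Finset.univ.erase y, A y z * v z = E * v y := by
    rw [Finset.add_sum_erase _ (fun z => A y z * v z) (Finset.mem_univ y)]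
    simpa [Matrix.mulVec, dotProduct] using congrFun h y
  have hoff : -A y x * v x ≤ ∑ z ∈ Finset.univ.erase y, -A y z * v z :=
    Finset.single_le_sum (f := fun z => -A y z * v z)
      (fun z hz => mul_nonneg (neg_nonneg.mpr (hA y z (Finset.ne_of_mem_erase hz).symm)) (hv z))
      (Finset.mem_erase.mpr ⟨hxy, Finset.mem_univ x⟩)
  simp only [neg_mul, Finset.sum_neg_distrib] at hoff
  linarith

theorem stmt_13_general {B : Type*} [Fintype B] [DecidableEq B]
    (H : Matrix B B ℂ) (hH : H.IsHermitian) (hPSD : H.PosSemidef)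
    -- `H` is stoquastic in the basis `B`: real entries, non-positive off the diagonal:
    (hreal : ∀ z z', (H z z').im = 0)
    (hstoq : ∀ z z', z ≠ z' → (H z z').re ≤ 0)
    -- every non-zero off-diagonal entry has magnitude at least `Γ > 0`:
    (Γ : ℝ) (hΓ : 0 < Γ)
    (hΓle : ∀ z z', z ≠ z' → H z z' ≠ 0 → Γ ≤ ‖H z z'‖)
    -- `ψ` is the strictly positive unit-norm ground state, `E₀` the smallest eigenvalue:
    (E₀ : ℝ)
    (hgap : E₀ < opNorm H)
    (ψ : B → ℝ) (hpos : ∀ x, 0 < ψ x)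
    (hground : H.mulVec (fun x => (ψ x : ℂ)) = (E₀ : ℂ) • fun x => (ψ x : ℂ)) :
    ∀ x y, x ≠ y → H x y ≠ 0 →
      Γ / opNorm H ≤ ψ y / ψ x ∧
      (Γ / opNorm H) ^ 2 ≤
        ψ y / ψ x * ((opNorm H * (if x = y then 1 else 0) - (H x y).re) /
          (opNorm H - E₀)) := by
  intro x y hxy hHxy
  have hE₀ : 0 ≤ E₀ :=
    hPSD.nonneg_of_mulVec_eq_smul (fun h => (hpos x).ne' (by simpa using congrFun h x)) hground
  have hN : 0 < opNorm H := hE₀.trans_lt hgap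
  have hground_re : H.map Complex.re *ᵥ ψ = E₀ • ψ := funext fun i => by
    rw [← Matrix.re_mulVec_ofReal, hground]; simp
  have hrow : -(H y x).re * ψ x ≤ ((H y y).re - E₀) * ψ y :=
    Matrix.neg_apply_mul_le_of_mulVec_eq_smul (A := H.map Complex.re) hstoq
      (fun z => (hpos z).le) hground_re hxy
  have hsym : (H y x).re = (H x y).re := by rw [← hH.apply x y]; simp
  have hΓxy : Γ ≤ -(H x y).re := by
    have := hΓle x y hxy hHxy
    rwa [← Complex.abs_re_eq_norm.mpr (hreal x y), abs_of_nonpos (hstoq x y hxy)] at this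
  have hdiag : (H y y).re ≤ opNorm H := (Complex.re_le_norm _).trans (norm_apply_le_opNorm H y y)
  have hratio : Γ / opNorm H ≤ ψ y / ψ x := by
    rw [div_le_div_iff₀ hN (hpos x)]
    calc Γ * ψ x ≤ -(H x y).re * ψ x := by gcongr; exact (hpos x).le
      _ ≤ ((H y y).re - E₀) * ψ y := hsym ▸ hrow
      _ ≤ opNorm H * ψ y := by gcongr; exacts [(hpos y).le, by linarith]
      _ = ψ y * opNorm H := mul_comm _ _
  have hentry : Γ / opNorm H ≤ -(H x y).re / (opNorm H - E₀) := by
    calc Γ / opNorm H ≤ Γ / (opNorm H - E₀) := by gcongr; linarith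
      _ ≤ -(H x y).re / (opNorm H - E₀) := by gcongr
  refine ⟨hratio, ?_⟩
  rw [if_neg hxy, mul_zero, zero_sub, sq]
  exact mul_le_mul hratio hentry (by positivity) (div_nonneg (hpos y).le (hpos x).le)

/-- Inequality (39) of the paper: for an irreducible stoquastic `H` with strictly
positive ground state `ψ`, whenever `H_{xy} ≠ 0` for `x ≠ y` we have
`ψ_y/ψ_x ≥ Γ/‖H‖`, hence `P_{xy} := (ψ_y/ψ_x)(‖H‖δ_{xy} - H_{xy})/(‖H‖-E₀)`
satisfies `P_{xy} ≥ (Γ/‖H‖)²`. -/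
theorem stmt_13 {B : Type*} [Fintype B] [DecidableEq B]
    (H : Matrix B B ℂ) (hH : H.IsHermitian) (hPSD : H.PosSemidef)
    -- `H` is stoquastic in the basis `B`: real entries, non-positive off the diagonal:
    (hreal : ∀ z z', (H z z').im = 0)
    (hstoq : ∀ z z', z ≠ z' → (H z z').re ≤ 0)
    -- `H` is irreducible:
    (hirr : (SimpleGraph.fromRel (fun z z' : B => H z z' ≠ 0)).Connected)
    -- every non-zero off-diagonal entry has magnitude at least `Γ > 0`:
    (Γ : ℝ) (hΓ : 0 < Γ)
    (hΓle : ∀ z z', z ≠ z' → H z z' ≠ 0 → Γ ≤ ‖H z z'‖)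
    -- `ψ` is the strictly positive unit-norm ground state, `E₀` the smallest eigenvalue:
    (E₀ : ℝ) (hleast : ∀ i, E₀ ≤ hH.eigenvalues i)
    (hgap : E₀ < opNorm H)
    (ψ : B → ℝ) (hpos : ∀ x, 0 < ψ x) (hψnorm : ∑ z, ψ z ^ 2 = 1)
    (hground : H.mulVec (fun x => (ψ x : ℂ)) = (E₀ : ℂ) • fun x => (ψ x : ℂ)) :
    ∀ x y, x ≠ y → H x y ≠ 0 →
      Γ / opNorm H ≤ ψ y / ψ x ∧
      (Γ / opNorm H) ^ 2 ≤
        ψ y / ψ x * ((opNorm H * (if x = y then 1 else 0) - (H x y).re) /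
          (opNorm H - E₀)) :=
  stmt_13_general H hH hPSD hreal hstoq Γ hΓ hΓle E₀ hgap ψ hpos hground
end

section
/- Let n, k ≥ 1, ε < 1/4, and let H be a Hermitian matrix indexed by B = {0,1}ⁿ over ℂ such that H_{xy} = 0 whenever the Hamming distance between x and y exceeds k (H is k-local in Hamming distance). Let ψ be a unit-norm eigenvector of H with smallest eigenvalue E₀, and suppose |π({0ⁿ}) − 1/2| ≤ ε and |π({1ⁿ}) − 1/2| ≤ ε (ψ is ε-close to the GHZ state in probability). If ⌊(n−1)/k⌋ ≥ 1, then Δ_H ≤ 16ε(‖H‖ − E₀)/(⌊(n−1)/k⌋·(1 − 2ε)²). -/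
open scoped BigOperators ComplexOrder
namespace GHZ
open Matrix
set_option linter.unusedSectionVars false
set_option maxHeartbeats 1000000
variable {B : Type*} [Fintype B] [DecidableEq B]

lemma conj_mul_self (z : ℂ) : (starRingEnd ℂ) z * z = ((‖z‖ ^ 2 : ℝ) : ℂ) := by
  rw [mul_comm, Complex.mul_conj, Complex.normSq_eq_norm_sq]

lemma dot_self (v : B → ℂ) : (star v ⬝ᵥ v) = ((∑ z, ‖v z‖ ^ 2 : ℝ) : ℂ) := by
  simp only [dotProduct, Pi.star_apply, RCLike.star_def, Complex.ofReal_sum]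
  congr 1; funext z
  exact conj_mul_self _

lemma dot_diag (v : B → ℂ) (d : B → ℝ) :
    (star v ⬝ᵥ ((Matrix.diagonal (Complex.ofReal ∘ d)) *ᵥ v)).re
    = ∑ z, d z * ‖v z‖ ^ 2 := by
  simp only [mulVec_diagonal, dotProduct, Pi.star_apply, RCLike.star_def, Function.comp]
  rw [Complex.re_sum]
  congr 1; funext z
  rw [mul_comm ((Complex.ofReal (d z))) (v z), ← mul_assoc, conj_mul_self, ← Complex.ofReal_mul,
    Complex.ofReal_re]; ring

lemma conj_quad (H : Matrix B B ℂ) (hH : H.IsHermitian) (x y : B → ℂ) :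
    star x ⬝ᵥ H *ᵥ y = star (star y ⬝ᵥ H *ᵥ x) := by
  rw [star_dotProduct, star_mulVec, hH.eq, dotProduct_mulVec]

lemma dot_unitary_left (U : Matrix B B ℂ) (v w : B → ℂ) :
    star v ⬝ᵥ (U *ᵥ w) = star ((star U) *ᵥ v) ⬝ᵥ w := by
  rw [star_mulVec, ← star_eq_conjTranspose, star_star, dotProduct_mulVec]

lemma dot_unitary (U : Matrix B B ℂ) (hU : U ∈ Matrix.unitaryGroup B ℂ) (v w : B → ℂ) :
    star ((star U) *ᵥ v) ⬝ᵥ ((star U) *ᵥ w) = star v ⬝ᵥ w := by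
  rw [star_mulVec, ← star_eq_conjTranspose (star U), star_star,
    dotProduct_mulVec, vecMul_vecMul, (Matrix.mem_unitaryGroup_iff).mp hU, vecMul_one]

lemma quad_spectral (H : Matrix B B ℂ) (hH : H.IsHermitian) (v : B → ℂ) :
    (star v ⬝ᵥ H *ᵥ v).re
      = ∑ b, hH.eigenvalues b *
          ‖((star (hH.eigenvectorUnitary : Matrix B B ℂ)) *ᵥ v) b‖ ^ 2 := by
  conv_lhs => rw [hH.spectral_theorem, Unitary.conjStarAlgAut_apply]
  rw [← mulVec_mulVec, ← mulVec_mulVec, dot_unitary_left, ← dot_diag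
    ((star (hH.eigenvectorUnitary : Matrix B B ℂ)) *ᵥ v) hH.eigenvalues]
  congr 2

lemma sumnorm_spectral (H : Matrix B B ℂ) (hH : H.IsHermitian) (v : B → ℂ) :
    ∑ b, ‖((star (hH.eigenvectorUnitary : Matrix B B ℂ)) *ᵥ v) b‖ ^ 2
      = ∑ z, ‖v z‖ ^ 2 := by
  have := dot_unitary (hH.eigenvectorUnitary : Matrix B B ℂ) (hH.eigenvectorUnitary).2 v v
  rw [dot_self, dot_self] at this
  exact_mod_cast this

lemma quad_le_opNorm (H : Matrix B B ℂ) (v : B → ℂ) :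
    (star v ⬝ᵥ H *ᵥ v).re ≤ opNorm H * ∑ z, ‖v z‖ ^ 2 := by
  set v' : EuclideanSpace ℂ B := (WithLp.equiv 2 (B → ℂ)).symm v with hv'
  have hnorm : ‖v'‖ ^ 2 = ∑ z, ‖v z‖ ^ 2 := by
    rw [EuclideanSpace.norm_eq, Real.sq_sqrt (by positivity)]
    rfl
  have happ : (Matrix.toEuclideanCLM (𝕜 := ℂ) H) v' = (WithLp.equiv 2 (B → ℂ)).symm (H *ᵥ v) := by
    rw [hv']; rfl
  have hinner : (inner ℂ v' ((Matrix.toEuclideanCLM (𝕜 := ℂ) H) v') : ℂ) = star v ⬝ᵥ H *ᵥ v := by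
    rw [happ, EuclideanSpace.inner_eq_star_dotProduct]
    rw [dotProduct_comm]; rfl
  calc (star v ⬝ᵥ H *ᵥ v).re = Complex.re (inner ℂ v' ((Matrix.toEuclideanCLM (𝕜 := ℂ) H) v')) := by
        rw [hinner]
    _ ≤ ‖v'‖ * ‖(Matrix.toEuclideanCLM (𝕜 := ℂ) H) v'‖ := re_inner_le_norm (𝕜 := ℂ) _ _
    _ ≤ ‖v'‖ * (‖Matrix.toEuclideanCLM (𝕜 := ℂ) H‖ * ‖v'‖) := by
        apply mul_le_mul_of_nonneg_left ((Matrix.toEuclideanCLM (𝕜 := ℂ) H).le_opNorm v')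
          (norm_nonneg _)
    _ = opNorm H * ‖v'‖ ^ 2 := by rw [opNorm]; ring
    _ = opNorm H * ∑ z, ‖v z‖ ^ 2 := by rw [hnorm]

lemma quad_ge (H : Matrix B B ℂ) (hH : H.IsHermitian) (μ : ℝ)
    (hμ : ∀ b, μ ≤ hH.eigenvalues b) (v : B → ℂ) :
    μ * (∑ z, ‖v z‖ ^ 2) ≤ (star v ⬝ᵥ H *ᵥ v).re := by
  rw [quad_spectral H hH v, ← sumnorm_spectral H hH v, Finset.mul_sum]
  exact Finset.sum_le_sum fun b _ => mul_le_mul_of_nonneg_right (hμ b) (by positivity)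

lemma second_eigen (H : Matrix B B ℂ) (hH : H.IsHermitian) (E : ℕ → ℝ) (hmono : Monotone E)
    (σ : Fin (Fintype.card B) ≃ B) (hσ : ∀ i : Fin (Fintype.card B), E i = hH.eigenvalues (σ i))
    (hcard : 1 < Fintype.card B)
    (ψ φ : B → ℂ) (hψ : ∑ z, ‖ψ z‖ ^ 2 = 1) (hground : H *ᵥ ψ = (E 0 : ℂ) • ψ)
    (hφ : ∑ z, ‖φ z‖ ^ 2 = 1) (horth : star ψ ⬝ᵥ φ = 0) :
    E 1 ≤ (star φ ⬝ᵥ H *ᵥ φ).re := by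
  have hev : ∀ b, hH.eigenvalues b = E (σ.symm b) := by
    intro b
    rw [hσ (σ.symm b), Equiv.apply_symm_apply]
  rcases le_or_gt (E 1) (E 0) with hE | hE
  · calc E 1 ≤ E 0 := hE
      _ = E 0 * ∑ z, ‖φ z‖ ^ 2 := by rw [hφ, mul_one]
      _ ≤ _ := quad_ge H hH (E 0) (fun b => by rw [hev b]; exact hmono (Nat.zero_le _)) φ
  · set U : Matrix B B ℂ := (hH.eigenvectorUnitary : Matrix B B ℂ) with hU
    set i0 : Fin (Fintype.card B) := ⟨0, by omega⟩ with hi0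
    set b0 : B := σ i0 with hb0
    have key : ∀ b, b ≠ b0 → E 1 ≤ hH.eigenvalues b := by
      intro b hb
      rw [hev b]
      have : σ.symm b ≠ i0 := fun h => hb (by rw [hb0, ← h, Equiv.apply_symm_apply])
      have h1 : 1 ≤ ((σ.symm b : Fin (Fintype.card B)) : ℕ) := by
        by_contra h
        apply this
        apply Fin.ext
        have h0 : ((σ.symm b : Fin (Fintype.card B)) : ℕ) = 0 := by omega
        rw [h0, hi0]
      exact hmono h1
    set y : B → ℂ := (star U) *ᵥ ψ with hy
    set zv : B → ℂ := (star U) *ᵥ φ with hz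
    have hUU : U * star U = 1 := (Matrix.mem_unitaryGroup_iff).mp hH.eigenvectorUnitary.2
    have hDy : (Matrix.diagonal (RCLike.ofReal ∘ hH.eigenvalues)) *ᵥ y = (E 0 : ℂ) • y := by
      rw [← hH.conjStarAlgAut_star_eigenvectorUnitary, Unitary.conjStarAlgAut_star_apply, hy, mulVec_mulVec]
      have : star U * H * U * star U = star U * H := by
        rw [mul_assoc (star U * H), hUU, mul_one]
      rw [this, ← mulVec_mulVec, hground, mulVec_smul]
    have hyb : ∀ b, b ≠ b0 → y b = 0 := by
      intro b hb
      have hb' := congr_fun hDy b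
      simp only [mulVec_diagonal, Function.comp, Pi.smul_apply, smul_eq_mul] at hb'
      have hne : (hH.eigenvalues b : ℂ) ≠ (E 0 : ℂ) := by
        rw [Ne, Complex.ofReal_inj]
        exact ne_of_gt (lt_of_lt_of_le hE (key b hb))
      have := sub_eq_zero.mpr hb'
      rw [← sub_mul] at this
      rcases mul_eq_zero.mp this with h | h
      · exact absurd (sub_eq_zero.mp h) hne
      · exact h
    have hsumy : ∑ b, ‖y b‖ ^ 2 = 1 := by rw [hy, hU, sumnorm_spectral H hH ψ, hψ]
    have hyb0 : y b0 ≠ 0 := by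
      intro h
      rw [Finset.sum_eq_single b0 (fun b _ hb => by rw [hyb b hb]; simp) (by simp)] at hsumy
      rw [h] at hsumy; simp at hsumy
    have horth' : star y ⬝ᵥ zv = 0 := by
      rw [hy, hz, hU, dot_unitary _ hH.eigenvectorUnitary.2, horth]
    have hzb0 : zv b0 = 0 := by
      rw [dotProduct, Finset.sum_eq_single b0
        (fun b _ hb => by rw [Pi.star_apply, hyb b hb]; simp) (by simp)] at horth'
      rcases mul_eq_zero.mp horth' with h | h
      · exact absurd h (by simpa using hyb0)
      · exact h
    rw [quad_spectral H hH φ]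
    have hsumz : ∑ b, ‖zv b‖ ^ 2 = 1 := by rw [hz, hU, sumnorm_spectral H hH φ, hφ]
    calc E 1 = E 1 * ∑ b, ‖zv b‖ ^ 2 := by rw [hsumz, mul_one]
      _ = ∑ b, E 1 * ‖zv b‖ ^ 2 := Finset.mul_sum _ _ _
      _ ≤ ∑ b, hH.eigenvalues b * ‖zv b‖ ^ 2 := by
          apply Finset.sum_le_sum
          intro b _
          rcases eq_or_ne b b0 with h | h
          · rw [h, hzb0]; simp
          · exact mul_le_mul_of_nonneg_right (key b h) (by positivity)
      _ = _ := rfl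

lemma mem_bdry (H : Matrix B B ℂ) (S : Finset B) (x : B) :
    x ∈ bdry H S ↔ x ∈ S ∧ ∃ y ∉ S, H x y ≠ 0 := by
  classical
  simp [bdry]

lemma sum_ite_piS (ψ : B → ℂ) (T : Finset B) :
    ∑ z, (if z ∈ T then ‖ψ z‖ ^ 2 else 0) = piS ψ T := by
  rw [Finset.sum_ite_mem, Finset.univ_inter, piS]

lemma cut_bound (H : Matrix B B ℂ) (hH : H.IsHermitian) (E0 E1 : ℝ)
    (ψ : B → ℂ) (hψ : ∑ z, ‖ψ z‖ ^ 2 = 1) (hground : H *ᵥ ψ = (E0 : ℂ) • ψ)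
    (hpsd : ∀ v : B → ℂ, E0 * (∑ z, ‖v z‖ ^ 2) ≤ (star v ⬝ᵥ H *ᵥ v).re)
    (hvar : ∀ φ : B → ℂ, ∑ z, ‖φ z‖ ^ 2 = 1 → star ψ ⬝ᵥ φ = 0 →
      E1 ≤ (star φ ⬝ᵥ H *ᵥ φ).re)
    (S : Finset B) (hp : 0 < piS ψ S) (hq : 0 < piS ψ Sᶜ) :
    E1 - E0 ≤ (opNorm H - E0) * piS ψ (bdry H S) / (piS ψ S * piS ψ Sᶜ) := by
  set p := piS ψ S with hpdef
  set q := piS ψ Sᶜ with hqdef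
  set pb := piS ψ (bdry H S) with hpbdef
  set w : B → ℂ := fun z => if z ∈ S then ψ z else 0 with hwdef
  set u : B → ℂ := fun z => if z ∈ S then 0 else ψ z with hudef
  set w' : B → ℂ := fun z => if z ∈ bdry H S then ψ z else 0 with hw'def
  have hwu : w + u = ψ := by
    funext z; by_cases h : z ∈ S <;> simp [hwdef, hudef, h]
  have hpq1 : p + q = 1 := by
    rw [hpdef, hqdef, piS, piS, ← hψ]
    rw [← Finset.sum_add_sum_compl S]
  -- dot products with ψ
  have hdotw : star w ⬝ᵥ ψ = ((p : ℝ) : ℂ) := by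
    rw [hpdef, ← sum_ite_piS ψ S, dotProduct]
    push_cast
    congr 1; funext z
    by_cases h : z ∈ S <;> simp [hwdef, h, conj_mul_self]
  have hdotu : star u ⬝ᵥ ψ = ((q : ℝ) : ℂ) := by
    rw [hqdef, ← sum_ite_piS ψ Sᶜ, dotProduct]
    push_cast
    congr 1; funext z
    by_cases h : z ∈ S <;> simp [hudef, h, conj_mul_self]
  -- quadratic quantities
  set a := (star w ⬝ᵥ H *ᵥ w).re with hadef
  set b := (star u ⬝ᵥ H *ᵥ u).re with hbdef
  set c := (star w ⬝ᵥ H *ᵥ u).re with hcdef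
  have hcre : (star u ⬝ᵥ H *ᵥ w).re = c := by
    rw [conj_quad H hH u w, hcdef, RCLike.star_def, Complex.conj_re]
  have hsplit : ∀ v : B → ℂ, star v ⬝ᵥ H *ᵥ ψ = star v ⬝ᵥ H *ᵥ w + star v ⬝ᵥ H *ᵥ u := by
    intro v; rw [← hwu, mulVec_add, dotProduct_add]
  have ha : a + c = E0 * p := by
    have h := hsplit w
    rw [hground, dotProduct_smul, hdotw, smul_eq_mul, ← Complex.ofReal_mul] at h
    have := congr_arg Complex.re h.symm
    rw [Complex.add_re, Complex.ofReal_re] at this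
    exact this
  have hb : b + c = E0 * q := by
    have h := hsplit u
    rw [hground, dotProduct_smul, hdotu, smul_eq_mul, ← Complex.ofReal_mul] at h
    have := congr_arg Complex.re h.symm
    rw [Complex.add_re, Complex.ofReal_re, hcre] at this
    linarith [this]
  -- boundary replacement
  have hbS : ∀ z, z ∈ bdry H S → z ∈ S := fun z hz => ((mem_bdry H S z).mp hz).1
  have hHu0 : ∀ z, z ∈ S → z ∉ bdry H S → (H *ᵥ u) z = 0 := by
    intro z hzS hzb
    rw [mem_bdry] at hzb
    push_neg at hzb
    have hall := hzb hzS
    rw [mulVec, dotProduct]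
    apply Finset.sum_eq_zero
    intro y _
    by_cases hy : y ∈ S
    · simp [hudef, hy]
    · simp [hall y hy]
  have hcc : star w ⬝ᵥ (H *ᵥ u) = star w' ⬝ᵥ (H *ᵥ u) := by
    rw [dotProduct, dotProduct]
    apply Finset.sum_congr rfl
    intro z _
    by_cases hzb : z ∈ bdry H S
    · simp [hwdef, hw'def, hzb, hbS z hzb]
    · by_cases hzS : z ∈ S
      · simp [hwdef, hw'def, hzb, hzS, hHu0 z hzS hzb]
      · simp [hwdef, hw'def, hzb, hzS]
  set c2 := (star w' ⬝ᵥ H *ᵥ u).re with hc2def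
  have hc2 : c2 = c := by rw [hc2def, hcdef, hcc]
  -- PSD on w' + u
  have hw'mass : ∑ z, ‖w' z‖ ^ 2 = pb := by
    rw [hpbdef, ← sum_ite_piS ψ (bdry H S)]
    congr 1; funext z
    by_cases h : z ∈ bdry H S <;> simp [hw'def, h]
  have humass : ∑ z, ‖u z‖ ^ 2 = q := by
    rw [hqdef, ← sum_ite_piS ψ Sᶜ]
    congr 1; funext z
    by_cases h : z ∈ S <;> simp [hudef, h]
  have hwu'mass : ∑ z, ‖(w' + u) z‖ ^ 2 = pb + q := by
    rw [← hw'mass, ← humass, ← Finset.sum_add_distrib]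
    apply Finset.sum_congr rfl
    intro z _
    by_cases hzS : z ∈ S
    · have : u z = 0 := by simp [hudef, hzS]
      simp [Pi.add_apply, this]
    · have h1 : w' z = 0 := by
        have : z ∉ bdry H S := fun h => hzS (hbS z h)
        simp [hw'def, this]
      simp [Pi.add_apply, h1]
  have hpsd' := hpsd (w' + u)
  have hexp : (star (w' + u) ⬝ᵥ H *ᵥ (w' + u)).re
      = (star w' ⬝ᵥ H *ᵥ w').re + b + 2 * c := by
    have hstar : star (w' + u) = star w' + star u := star_add _ _
    rw [hstar, mulVec_add, dotProduct_add, add_dotProduct, add_dotProduct]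
    have hconj : (star u ⬝ᵥ H *ᵥ w').re = c2 := by
      rw [conj_quad H hH u w', hc2def, RCLike.star_def, Complex.conj_re]
    simp only [Complex.add_re]
    have e1 : (star w' ⬝ᵥ H *ᵥ u).re = c := by rw [← hcc]
    rw [hconj, hc2, e1]; ring
  rw [hwu'mass, hexp] at hpsd'
  -- bound on A := -c
  have hA : -c ≤ (opNorm H - E0) * pb := by
    have hα := quad_le_opNorm H w'
    rw [hw'mass] at hα
    nlinarith [hb, hpsd', hα]
  -- trial state
  set r := Real.sqrt (q / p) with hrdef
  set s := Real.sqrt (p / q) with hsdef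
  have hr2 : r * r = q / p := Real.mul_self_sqrt (by positivity)
  have hs2 : s * s = p / q := Real.mul_self_sqrt (by positivity)
  have hrs : r * s = 1 := by
    rw [hrdef, hsdef, ← Real.sqrt_mul (by positivity)]
    rw [show q / p * (p / q) = 1 by field_simp]
    exact Real.sqrt_one
  set φ : B → ℂ := ((r : ℝ) : ℂ) • w - ((s : ℝ) : ℂ) • u with hφdef
  have hφnorm : ∑ z, ‖φ z‖ ^ 2 = 1 := by
    have hz : ∀ z, ‖φ z‖ ^ 2 = r * r * (if z ∈ S then ‖ψ z‖ ^ 2 else 0)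
        + s * s * (if z ∈ S then 0 else ‖ψ z‖ ^ 2) := by
      intro z
      by_cases h : z ∈ S
      · simp only [hφdef, Pi.sub_apply, Pi.smul_apply, smul_eq_mul, hwdef, hudef, if_pos h,
          mul_zero, sub_zero]
        rw [norm_mul, mul_pow, Complex.norm_real, Real.norm_eq_abs, sq_abs]
        ring
      · simp only [hφdef, Pi.sub_apply, Pi.smul_apply, smul_eq_mul, hwdef, hudef, if_neg h,
          mul_zero, zero_sub, norm_neg]
        rw [norm_mul, mul_pow, Complex.norm_real, Real.norm_eq_abs, sq_abs]
        ring
    rw [Finset.sum_congr rfl (fun z _ => hz z)]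
    rw [Finset.sum_add_distrib, ← Finset.mul_sum, ← Finset.mul_sum, sum_ite_piS]
    have : ∑ z, (if z ∈ S then (0:ℝ) else ‖ψ z‖ ^ 2) = q := by
      rw [hqdef, ← sum_ite_piS ψ Sᶜ]
      congr 1; funext z
      by_cases h : z ∈ S <;> simp [h]
    rw [this, hr2, hs2, ← hpdef]
    field_simp
    linarith [hpq1]
  have hdotwψ : star ψ ⬝ᵥ w = ((p : ℝ) : ℂ) := by
    rw [hpdef, ← sum_ite_piS ψ S, dotProduct]
    push_cast
    congr 1; funext z
    by_cases h : z ∈ S <;> simp [hwdef, h, conj_mul_self]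
  have hdotuψ : star ψ ⬝ᵥ u = ((q : ℝ) : ℂ) := by
    rw [hqdef, ← sum_ite_piS ψ Sᶜ, dotProduct]
    push_cast
    congr 1; funext z
    by_cases h : z ∈ S <;> simp [hudef, h, conj_mul_self]
  have horthφ : star ψ ⬝ᵥ φ = 0 := by
    rw [hφdef, dotProduct_sub, dotProduct_smul, dotProduct_smul, hdotwψ, hdotuψ,
      smul_eq_mul, smul_eq_mul, ← Complex.ofReal_mul, ← Complex.ofReal_mul, ← Complex.ofReal_sub]
    rw [Complex.ofReal_eq_zero]
    have h1 : r * p = Real.sqrt (q * p) := by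
      rw [hrdef, ← Real.sqrt_sq hp.le, ← Real.sqrt_mul (by positivity)]
      congr 1
      field_simp
      rw [Real.sq_sqrt (by positivity)]
    have h2 : s * q = Real.sqrt (p * q) := by
      rw [hsdef, ← Real.sqrt_sq hq.le, ← Real.sqrt_mul (by positivity)]
      congr 1
      field_simp
      rw [Real.sq_sqrt (by positivity)]
    rw [h1, h2, mul_comm q p]
    ring
  have hvarφ := hvar φ hφnorm horthφ
  -- Rayleigh quotient of φ
  have hstarφ : star φ = ((r : ℝ) : ℂ) • star w - ((s : ℝ) : ℂ) • star u := by
    rw [hφdef]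
    simp [star_sub, star_smul, Complex.conj_ofReal]
  have hrayC : star φ ⬝ᵥ H *ᵥ φ
      = ((r * r : ℝ) : ℂ) * (star w ⬝ᵥ H *ᵥ w) + ((s * s : ℝ) : ℂ) * (star u ⬝ᵥ H *ᵥ u)
        - ((r * s : ℝ) : ℂ) * (star w ⬝ᵥ H *ᵥ u)
        - ((s * r : ℝ) : ℂ) * (star u ⬝ᵥ H *ᵥ w) := by
    rw [hstarφ, hφdef, mulVec_sub, mulVec_smul, mulVec_smul]
    simp only [sub_dotProduct, dotProduct_sub, smul_dotProduct, dotProduct_smul, smul_eq_mul]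
    push_cast
    ring
  have hray : (star φ ⬝ᵥ H *ᵥ φ).re = (q/p) * a + (p/q) * b - 2 * c := by
    rw [hrayC]
    simp only [Complex.sub_re, Complex.add_re, Complex.re_ofReal_mul]
    rw [← hadef, ← hbdef, ← hcdef, hcre, hr2, hs2, hrs, mul_comm s r, hrs]
    ring
  rw [hray] at hvarφ
  have hp0 : p ≠ 0 := hp.ne'
  have hq0 : q ≠ 0 := hq.ne'
  have hfinal : (q/p) * a + (p/q) * b - 2 * c - E0 = (-c) / (p * q) := by
    have ha' : a = E0 * p - c := by linarith
    have hb' : b = E0 * q - c := by linarith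
    rw [ha', hb']
    have hq' : q = 1 - p := by linarith
    rw [hq'] at hq0 ⊢
    field_simp
    ring
  have hstep : E1 - E0 ≤ (-c) / (p * q) := by linarith
  calc E1 - E0 ≤ (-c) / (p * q) := hstep
    _ ≤ (opNorm H - E0) * pb / (p * q) := by
        gcongr
    _ = (opNorm H - E0) * piS ψ (bdry H S) / (piS ψ S * piS ψ Sᶜ) := by rw [hpbdef, hpdef, hqdef]


open Fin.NatCast in
theorem stmt_14_main (n k : ℕ) (hn : 1 ≤ n) (hk : 1 ≤ k) (ε : ℝ) (hε : ε < 1 / 4)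
    (H : Matrix (Fin n → Bool) (Fin n → Bool) ℂ) (hH : H.IsHermitian)
    (hloc : ∀ x y, k < hammingDist x y → H x y = 0)
    (E : ℕ → ℝ) (hmono : Monotone E)
    (henum : ∃ σ : Fin (Fintype.card (Fin n → Bool)) ≃ (Fin n → Bool),
      ∀ i, E i = hH.eigenvalues (σ i))
    (ψ : (Fin n → Bool) → ℂ) (hψnorm : ∑ z, ‖ψ z‖ ^ 2 = 1)
    (hground : H.mulVec ψ = (E 0 : ℂ) • ψ)
    (h0 : |‖ψ (fun _ => false)‖ ^ 2 - 1 / 2| ≤ ε)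
    (h1 : |‖ψ (fun _ => true)‖ ^ 2 - 1 / 2| ≤ ε)
    (hfloor : 1 ≤ (n - 1) / k) :
    E 1 - E 0 ≤ 16 * ε * (opNorm H - E 0) / (((n - 1) / k : ℕ) * (1 - 2 * ε) ^ 2) := by
  classical
  obtain ⟨σ, hσ⟩ := henum
  have hε0 : 0 ≤ ε := le_trans (abs_nonneg _) h0
  have hcard : 1 < Fintype.card (Fin n → Bool) := by
    rw [Fintype.card_fun, Fintype.card_bool, Fintype.card_fin]
    exact Nat.one_lt_two_pow_iff.mpr (by omega)
  haveI hNZ : NeZero (Fintype.card (Fin n → Bool)) := ⟨by omega⟩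
  have hσ' : ∀ i : Fin (Fintype.card (Fin n → Bool)), E i = hH.eigenvalues (σ i) := by
    intro i
    have h := hσ (i : ℕ)
    rwa [Fin.cast_val_eq_self] at h
  have hev : ∀ b, E 0 ≤ hH.eigenvalues b := by
    intro b
    rw [show hH.eigenvalues b = E (σ.symm b) by rw [hσ' (σ.symm b), Equiv.apply_symm_apply]]
    exact hmono (Nat.zero_le _)
  have hpsd : ∀ v : (Fin n → Bool) → ℂ,
      E 0 * (∑ z, ‖v z‖ ^ 2) ≤ (star v ⬝ᵥ H *ᵥ v).re :=
    fun v => quad_ge H hH (E 0) hev v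
  have hvar : ∀ φ : (Fin n → Bool) → ℂ, ∑ z, ‖φ z‖ ^ 2 = 1 → star ψ ⬝ᵥ φ = 0 →
      E 1 ≤ (star φ ⬝ᵥ H *ᵥ φ).re :=
    fun φ hφ ho => second_eigen H hH E hmono σ hσ' hcard ψ φ hψnorm hground hφ ho
  -- notation
  set z0 : Fin n → Bool := fun _ => false with hz0def
  set z1 : Fin n → Bool := fun _ => true with hz1def
  set wt : (Fin n → Bool) → ℕ := fun x => hammingDist x z0 with hwtdef
  have hwt0 : wt z0 = 0 := hammingDist_self z0
  have hwt1 : wt z1 = n := by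
    rw [hwtdef, hz0def, hz1def]
    simp [hammingDist]
  set m : ℕ := (n - 1) / k with hmdef
  have hmk : m * k ≤ n - 1 := Nat.div_mul_le_self (n - 1) k
  set Sf : ℕ → Finset (Fin n → Bool) := fun j => Finset.univ.filter (fun x => wt x ≤ j * k)
    with hSdef
  set D : ℕ → Finset (Fin n → Bool) := fun j => bdry H (Sf j) with hDdef
  -- boundary is in a band
  have hband : ∀ j x, x ∈ D j → j * k < wt x + k ∧ wt x ≤ j * k := by
    intro j x hx
    simp only [hDdef] at hx
    rw [mem_bdry] at hx
    obtain ⟨hxS, y, hyS, hHxy⟩ := hx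
    have hxw : wt x ≤ j * k := (Finset.mem_filter.mp hxS).2
    have hyw : j * k < wt y := by
      by_contra hcon
      exact hyS (Finset.mem_filter.mpr ⟨Finset.mem_univ _, by omega⟩)
    have hd : hammingDist x y ≤ k := by
      by_contra hcon
      exact hHxy (hloc x y (by omega))
    have htri : wt y ≤ hammingDist y x + wt x := hammingDist_triangle y x z0
    rw [hammingDist_comm y x] at htri
    exact ⟨by omega, hxw⟩
  -- each band excludes z0 and z1, bands are disjoint
  set J : Finset ℕ := Finset.Icc 1 m with hJdef
  have hDsub : ∀ j ∈ J, D j ⊆ Finset.univ \ {z0, z1} := by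
    intro j hj x hx
    obtain ⟨hlo, hhi⟩ := hband j x hx
    rw [hJdef, Finset.mem_Icc] at hj
    rw [Finset.mem_sdiff]
    refine ⟨Finset.mem_univ _, ?_⟩
    intro hmem
    rw [Finset.mem_insert, Finset.mem_singleton] at hmem
    rcases hmem with h | h
    · rw [h] at hlo hhi
      rw [hwt0] at hlo
      have : j * k < 1 * k := by omega
      have := Nat.lt_of_mul_lt_mul_right this
      omega
    · rw [h] at hlo hhi
      rw [hwt1] at hhi
      have hjm : j * k ≤ m * k := Nat.mul_le_mul_right k hj.2
      omega
  have hDdisj : ∀ i ∈ J, ∀ j ∈ J, i ≠ j → Disjoint (D i) (D j) := by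
    intro i _ j _ hij
    rw [Finset.disjoint_left]
    intro x hxi hxj
    obtain ⟨hlo1, hhi1⟩ := hband i x hxi
    obtain ⟨hlo2, hhi2⟩ := hband j x hxj
    have h1 : i * k < (j + 1) * k := by
      rw [Nat.succ_mul]
      omega
    have h2 : j * k < (i + 1) * k := by
      rw [Nat.succ_mul]
      omega
    have := Nat.lt_of_mul_lt_mul_right h1
    have := Nat.lt_of_mul_lt_mul_right h2
    omega
  -- total boundary mass is at most 2ε
  have hz0norm : 1 / 2 - ε ≤ ‖ψ z0‖ ^ 2 := by
    have := abs_le.mp h0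
    rw [hz0def]; linarith [this.1]
  have hz1norm : 1 / 2 - ε ≤ ‖ψ z1‖ ^ 2 := by
    have := abs_le.mp h1
    rw [hz1def]; linarith [this.1]
  have hz01 : z0 ≠ z1 := by
    intro h
    have := congr_fun h ⟨0, hn⟩
    simp [hz0def, hz1def] at this
  have hTmass : piS ψ (Finset.univ \ {z0, z1}) ≤ 2 * ε := by
    rw [piS, Finset.sum_sdiff_eq_sub (Finset.subset_univ _)]
    rw [Finset.sum_pair hz01, hψnorm]
    linarith
  have hsumD : ∑ j ∈ J, piS ψ (D j) ≤ 2 * ε := by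
    have hre : piS ψ (J.biUnion D) = ∑ j ∈ J, piS ψ (D j) := by
      rw [piS, Finset.sum_biUnion (fun i hi j hj hij => hDdisj i hi j hj hij)]
      rfl
    rw [← hre]
    refine le_trans ?_ hTmass
    rw [piS, piS]
    apply Finset.sum_le_sum_of_subset_of_nonneg
    · exact Finset.biUnion_subset.mpr hDsub
    · intro i _ _
      positivity
  have hmR : (1:ℝ) ≤ (m:ℝ) := by exact_mod_cast hfloor
  have hmpos : (0:ℝ) < (m:ℝ) := by linarith
  have hJne : J.Nonempty := ⟨1, by rw [hJdef, Finset.mem_Icc]; omega⟩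
  have hex : ∃ j ∈ J, piS ψ (D j) ≤ 2 * ε / m := by
    by_contra hcon
    push_neg at hcon
    have hlt : ∑ _j ∈ J, (2 * ε / (m:ℝ)) < ∑ j ∈ J, piS ψ (D j) :=
      Finset.sum_lt_sum_of_nonempty hJne (fun j hj => hcon j hj)
    rw [Finset.sum_const] at hlt
    have hcardJ : J.card = m := by rw [hJdef, Nat.card_Icc]; omega
    rw [hcardJ, nsmul_eq_mul] at hlt
    have heq : (m:ℝ) * (2 * ε / (m:ℝ)) = 2 * ε := by field_simp
    rw [heq] at hlt
    linarith
  obtain ⟨j0, hj0J, hj0⟩ := hex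
  rw [hJdef, Finset.mem_Icc] at hj0J
  have hz0S : z0 ∈ Sf j0 := Finset.mem_filter.mpr ⟨Finset.mem_univ _, by
    rw [hwt0]; exact Nat.zero_le _⟩
  have hz1S : z1 ∈ (Sf j0)ᶜ := by
    rw [Finset.mem_compl]
    intro hmem
    have hle := (Finset.mem_filter.mp hmem).2
    rw [hwt1] at hle
    have hj0k : j0 * k ≤ m * k := Nat.mul_le_mul_right k hj0J.2
    omega
  have hsingle : ∀ (T : Finset (Fin n → Bool)) (x : Fin n → Bool), x ∈ T →
      ‖ψ x‖ ^ 2 ≤ piS ψ T :=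
    fun T x hx => Finset.single_le_sum (f := fun z => ‖ψ z‖ ^ 2) (fun i _ => by positivity) hx
  have hhalf : 0 < 1 / 2 - ε := by linarith
  have hplow : 1 / 2 - ε ≤ piS ψ (Sf j0) := le_trans hz0norm (hsingle _ _ hz0S)
  have hqlow : 1 / 2 - ε ≤ piS ψ (Sf j0)ᶜ := le_trans hz1norm (hsingle _ _ hz1S)
  have hp : 0 < piS ψ (Sf j0) := lt_of_lt_of_le hhalf hplow
  have hq : 0 < piS ψ (Sf j0)ᶜ := lt_of_lt_of_le hhalf hqlow
  have hcut := cut_bound H hH (E 0) (E 1) ψ hψnorm hground hpsd hvar (Sf j0) hp hq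
  have hE0le : E 0 ≤ opNorm H := by
    have hq1 := quad_le_opNorm H ψ
    rw [hψnorm, mul_one] at hq1
    have hEψ : (star ψ ⬝ᵥ H *ᵥ ψ).re = E 0 := by
      rw [show H *ᵥ ψ = (E 0 : ℂ) • ψ from hground, dotProduct_smul, smul_eq_mul, dot_self,
        hψnorm]
      simp
    linarith
  set K := opNorm H - E 0 with hKdef
  have hK0 : 0 ≤ K := by rw [hKdef]; linarith
  have hpb0 : 0 ≤ piS ψ (bdry H (Sf j0)) := Finset.sum_nonneg (fun i _ => by positivity)
  have hj0' : piS ψ (bdry H (Sf j0)) ≤ 2 * ε / m := by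
    simpa [hDdef] using hj0
  have hpq : (1/2 - ε) * (1/2 - ε) ≤ piS ψ (Sf j0) * piS ψ (Sf j0)ᶜ :=
    mul_le_mul hplow hqlow hhalf.le (le_trans hhalf.le hplow)
  have hnum : K * piS ψ (bdry H (Sf j0)) ≤ K * (2 * ε / m) :=
    mul_le_mul_of_nonneg_left hj0' hK0
  have h2 : K * piS ψ (bdry H (Sf j0)) / (piS ψ (Sf j0) * piS ψ (Sf j0)ᶜ)
      ≤ K * (2 * ε / m) / ((1/2 - ε) * (1/2 - ε)) := by
    apply div_le_div₀ (mul_nonneg hK0 (div_nonneg (by linarith) hmpos.le)) hnum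
      (by positivity) hpq
  have h12 : (0:ℝ) < 1 - 2 * ε := by linarith
  have heq2 : K * (2 * ε / m) / ((1/2 - ε) * (1/2 - ε)) = 8 * ε * K / (m * (1 - 2*ε)^2) := by
    have hne : (1:ℝ)/2 - ε ≠ 0 := ne_of_gt hhalf
    have hm0 : (m:ℝ) ≠ 0 := ne_of_gt hmpos
    have h12' : (1:ℝ) - 2*ε ≠ 0 := ne_of_gt h12
    field_simp
    ring
  have hden : (0:ℝ) < (m:ℝ) * (1 - 2*ε)^2 := by positivity
  have hfin : 8 * ε * K / ((m:ℝ) * (1 - 2*ε)^2) ≤ 16 * ε * K / ((m:ℝ) * (1 - 2*ε)^2) := by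
    have h816 : 8 * ε * K ≤ 16 * ε * K := by nlinarith [mul_nonneg hε0 hK0]
    exact div_le_div₀ (by nlinarith [mul_nonneg hε0 hK0]) h816 hden le_rfl
  calc E 1 - E 0 ≤ K * piS ψ (bdry H (Sf j0)) / (piS ψ (Sf j0) * piS ψ (Sf j0)ᶜ) := hcut
    _ ≤ K * (2 * ε / m) / ((1/2 - ε) * (1/2 - ε)) := h2
    _ = 8 * ε * K / (m * (1 - 2*ε)^2) := heq2
    _ ≤ 16 * ε * K / (m * (1 - 2*ε)^2) := hfin
    _ = 16 * ε * (opNorm H - E 0) / ((((n - 1) / k : ℕ) : ℝ) * (1 - 2 * ε) ^ 2) := by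
        rw [hKdef, hmdef]

end GHZ

open Fin.NatCast in
/-- GHZ-type bound: if `H` is `k`-local in Hamming distance on `n`-bit strings and its
ground state puts probability within `ε` of `1/2` on each of the all-zeros and all-ones
strings, then `Δ_H ≤ 16ε(‖H‖-E₀)/(⌊(n-1)/k⌋(1-2ε)²)`. -/
theorem stmt_14 (n k : ℕ) (hn : 1 ≤ n) (hk : 1 ≤ k) (ε : ℝ) (hε : ε < 1 / 4)
    (H : Matrix (Fin n → Bool) (Fin n → Bool) ℂ) (hH : H.IsHermitian)
    -- `H` is `k`-local in Hamming distance: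
    (hloc : ∀ x y, k < hammingDist x y → H x y = 0)
    -- `E` enumerates the eigenvalues of `H` (with multiplicity) in increasing order:
    (E : ℕ → ℝ) (hmono : Monotone E)
    (henum : ∃ σ : Fin (Fintype.card (Fin n → Bool)) ≃ (Fin n → Bool),
      ∀ i, E i = hH.eigenvalues (σ i))
    -- `ψ` is a unit-norm ground state:
    (ψ : (Fin n → Bool) → ℂ) (hψnorm : ∑ z, ‖ψ z‖ ^ 2 = 1)
    (hground : H.mulVec ψ = (E 0 : ℂ) • ψ)
    -- the ground state is `ε`-close to the GHZ state in probability: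
    (h0 : |‖ψ (fun _ => false)‖ ^ 2 - 1 / 2| ≤ ε)
    (h1 : |‖ψ (fun _ => true)‖ ^ 2 - 1 / 2| ≤ ε)
    (hfloor : 1 ≤ (n - 1) / k) :
    E 1 - E 0 ≤ 16 * ε * (opNorm H - E 0) / (((n - 1) / k : ℕ) * (1 - 2 * ε) ^ 2) := by
  exact GHZ.stmt_14_main n k hn hk ε hε H hH hloc E hmono henum ψ hψnorm hground h0 h1 hfloor
end

section
/- Let T ≥ 4, k ≥ 1, M ≥ 0, and let H be a Hermitian matrix on ℂ^{2ⁿ} ⊗ ℂ^{T+1} whose ground state (unit eigenvector for the smallest eigenvalue E₀) is the history state ψ_hist = (1/√(T+1)) ∑_{t=0}^{T} ψ_t ⊗ |t⟩, where each ψ_t ∈ ℂ^{2ⁿ} is a unit vector. Suppose H is temporally k-local, i.e. ⟨ψ_t ⊗ t| H |ψ_{t'} ⊗ t'⟩ = 0 whenever |t − t'| > k, and |⟨ψ_t ⊗ t| H |ψ_{t'} ⊗ t'⟩| ≤ M for all t, t'. Then the spectral gap satisfies Δ_H ≤ 16·M·k(k+1)/(3(T+1)). -/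
open scoped BigOperators ComplexOrder

open scoped InnerProductSpace

private lemma sum_range_id' (N : ℕ) : ∑ i ∈ Finset.range N, (i:ℝ) = N*(N-1)/2 := by
  induction N with
  | zero => simp
  | succ n ih => rw [Finset.sum_range_succ, ih]; push_cast; ring

private lemma sum_range_sq' (N : ℕ) : ∑ i ∈ Finset.range N, (i:ℝ)^2 = N*(N-1)*(2*N-1)/6 := by
  induction N with
  | zero => simp
  | succ n ih => rw [Finset.sum_range_succ, ih]; push_cast; ring

private lemma sum_fin_w (T : ℕ) : ∑ t : Fin (T+1), (2*(t:ℝ) - T) = 0 := by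
  rw [Fin.sum_univ_eq_sum_range (fun i : ℕ => (2*(i:ℝ) - (T:ℝ) : ℝ)) (T+1)]
  have h2 := sum_range_id' (T+1)
  have : ∑ i ∈ Finset.range (T+1), (2*(i:ℝ) - T)
      = 2 * (∑ i ∈ Finset.range (T+1), (i:ℝ)) - (T+1) * T := by
    rw [Finset.sum_sub_distrib, ← Finset.mul_sum, Finset.sum_const, Finset.card_range]
    push_cast; ring
  rw [this, h2]; push_cast; ring

private lemma sum_fin_wsq (T : ℕ) :
    ∑ t : Fin (T+1), (2*(t:ℝ) - T)^2 = (T:ℝ)*((T:ℝ)+1)*((T:ℝ)+2)/3 := by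
  rw [Fin.sum_univ_eq_sum_range (fun i : ℕ => ((2*(i:ℝ) - (T:ℝ))^2 : ℝ)) (T+1)]
  have h1 := sum_range_sq' (T+1)
  have h2 := sum_range_id' (T+1)
  have h3 : ∑ i ∈ Finset.range (T+1), (2*(i:ℝ) - T)^2
      = 4*(∑ i ∈ Finset.range (T+1), (i:ℝ)^2)
        - 4*T*(∑ i ∈ Finset.range (T+1), (i:ℝ)) + (T+1) * T^2 := by
    have : ∀ i : ℕ, (2*(i:ℝ)-T)^2 = 4*(i:ℝ)^2 - 4*T*(i:ℝ) + T^2 := fun i => by ring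
    simp_rw [this]
    rw [Finset.sum_add_distrib, Finset.sum_sub_distrib, ← Finset.mul_sum, ← Finset.mul_sum,
      Finset.sum_const, Finset.card_range]
    push_cast; ring
  rw [h3, h1, h2]; push_cast; ring

private lemma sum_Icc_sq (a : ℕ) :
    ∑ d ∈ Finset.Icc (1:ℤ) (a:ℤ), (d:ℝ)^2 = a*(a+1)*(2*a+1)/6 := by
  induction a with
  | zero => simp
  | succ n ih =>
    have hins : Finset.Icc (1:ℤ) ((n:ℤ)+1) = insert ((n:ℤ)+1) (Finset.Icc (1:ℤ) (n:ℤ)) := by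
      ext x; simp [Finset.mem_Icc, Finset.mem_insert]; omega
    push_cast
    rw [hins, Finset.sum_insert (by simp)]
    rw [ih]; push_cast; ring

private lemma erase_split (a : ℕ) :
    (Finset.Icc (-(a:ℤ)) (a:ℤ)).erase 0
      = Finset.Icc (-(a:ℤ)) (-1) ∪ Finset.Icc (1:ℤ) (a:ℤ) := by
  ext x; simp [Finset.mem_Icc, Finset.mem_erase, Finset.mem_union]; omega

private lemma neg_Icc_image (a : ℕ) :
    Finset.Icc (-(a:ℤ)) (-1) = (Finset.Icc (1:ℤ) (a:ℤ)).image Neg.neg := by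
  ext x
  simp only [Finset.mem_Icc, Finset.mem_image]
  constructor
  · intro h; exact ⟨-x, by omega, by omega⟩
  · rintro ⟨b, hb, rfl⟩; omega

private lemma sum_erase_sq (a : ℕ) :
    ∑ d ∈ (Finset.Icc (-(a:ℤ)) (a:ℤ)).erase 0, (d:ℝ)^2
      = 2 * (a*(a+1)*(2*a+1)/6) := by
  rw [erase_split a, Finset.sum_union (by
    rw [Finset.disjoint_left]; intro x hx hx'
    simp [Finset.mem_Icc] at hx hx'; omega)]
  rw [neg_Icc_image a, Finset.sum_image (by intro x _ y _ h; exact neg_injective h)]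
  have : ∀ d : ℤ, ((-d : ℤ):ℝ)^2 = (d:ℝ)^2 := fun d => by push_cast; ring
  simp_rw [this]
  rw [sum_Icc_sq a]; ring

private lemma inner_sq_bound (T k : ℕ) (t : Fin (T+1)) :
    ∑ t' ∈ Finset.univ.filter
        (fun t' : Fin (T+1) => t' ≠ t ∧ |(t:ℤ) - (t':ℤ)| ≤ (k:ℤ)),
      ((t:ℝ) - (t':ℝ))^2
    ≤ 2 * (((min k T : ℕ) : ℝ)*(((min k T : ℕ) : ℝ)+1)*(2*((min k T : ℕ) : ℝ)+1)/6) := by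
  classical
  set a := min k T with ha
  set F := Finset.univ.filter
      (fun t' : Fin (T+1) => t' ≠ t ∧ |(t:ℤ) - (t':ℤ)| ≤ (k:ℤ)) with hF
  have hcast : ∀ t' : Fin (T+1), ((t:ℝ) - (t':ℝ))^2 = ((((t:ℤ) - (t':ℤ)) : ℤ) : ℝ)^2 := by
    intro t'; push_cast; ring
  rw [Finset.sum_congr rfl fun t' _ => hcast t']
  rw [← Finset.sum_image (f := fun d : ℤ => (d:ℝ)^2)
      (g := fun t' : Fin (T+1) => (t:ℤ) - (t':ℤ))
      (by intro x _ y _ h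
          have h' : (t:ℤ) - (x:ℤ) = (t:ℤ) - (y:ℤ) := h
          have : (x:ℤ) = (y:ℤ) := by omega
          exact Fin.ext (by exact_mod_cast this))]
  have hsub : F.image (fun t' : Fin (T+1) => (t:ℤ) - (t':ℤ))
      ⊆ (Finset.Icc (-(a:ℤ)) (a:ℤ)).erase 0 := by
    intro d hd
    simp only [Finset.mem_image, hF, Finset.mem_filter, Finset.mem_univ, true_and] at hd
    obtain ⟨t', ⟨hne, hk⟩, rfl⟩ := hd
    rw [abs_le] at hk
    have h1 : (t:ℤ) ≠ (t':ℤ) := by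
      intro h; exact hne (Fin.ext (by exact_mod_cast h)).symm
    have h2 : (t:ℤ) < T + 1 := by exact_mod_cast t.isLt
    have h3 : (t':ℤ) < T + 1 := by exact_mod_cast t'.isLt
    have h4 : 0 ≤ (t:ℤ) := by positivity
    have h5 : 0 ≤ (t':ℤ) := by positivity
    have h6 : ((a:ℕ):ℤ) = min (k:ℤ) (T:ℤ) := by rw [ha]; push_cast; omega
    simp only [Finset.mem_erase, Finset.mem_Icc]
    omega
  calc ∑ d ∈ F.image (fun t' : Fin (T+1) => (t:ℤ) - (t':ℤ)), (d:ℝ)^2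
      ≤ ∑ d ∈ (Finset.Icc (-(a:ℤ)) (a:ℤ)).erase 0, (d:ℝ)^2 :=
        Finset.sum_le_sum_of_subset_of_nonneg hsub (fun d _ _ => by positivity)
    _ = 2 * ((a:ℝ)*((a:ℝ)+1)*(2*(a:ℝ)+1)/6) := sum_erase_sq a


private lemma swap4 {X Y : Type*} [Fintype X] [Fintype Y] (F : X × Y → X × Y → ℂ) :
    ∑ p, ∑ q, F p q = ∑ t : Y, ∑ t' : Y, ∑ x : X, ∑ y : X, F (x, t) (y, t') := by
  rw [Fintype.sum_prod_type]
  calc ∑ x : X, ∑ t : Y, ∑ q, F (x, t) q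
      = ∑ t : Y, ∑ x : X, ∑ q, F (x, t) q := Finset.sum_comm
    _ = ∑ t : Y, ∑ x : X, ∑ t' : Y, ∑ y : X, F (x, t) (y, t') := by
        refine Finset.sum_congr rfl fun t _ => Finset.sum_congr rfl fun x _ => ?_
        rw [Fintype.sum_prod_type, Finset.sum_comm]
    _ = ∑ t : Y, ∑ t' : Y, ∑ x : X, ∑ y : X, F (x, t) (y, t') := by
        exact Finset.sum_congr rfl fun t _ => Finset.sum_comm


open Fin.NatCast in
lemma spectral_aux {B : Type*} [Fintype B] [DecidableEq B] [Nonempty B]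
    (H : Matrix B B ℂ) (hH : H.IsHermitian)
    (E : ℕ → ℝ) (hmono : Monotone E)
    (σ : Fin (Fintype.card B) ≃ B) (hE : ∀ i, E i = hH.eigenvalues (σ i))
    (ψ : B → ℂ) (hψ : ∑ x, ‖ψ x‖ ^ 2 = (1:ℝ))
    (hground : H.mulVec ψ = (E 0 : ℂ) • ψ)
    (hgap : E 0 < E 1)
    (v : B → ℂ) (hortho : ∑ x, (starRingEnd ℂ) (ψ x) * v x = 0) :
    E 1 * ∑ x, ‖v x‖ ^ 2 ≤ (∑ x, (starRingEnd ℂ) (v x) * H.mulVec v x).re := by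
  classical
  set b := hH.eigenvectorBasis with hb
  set μ := hH.eigenvalues with hμ
  have hinner : ∀ x y : EuclideanSpace ℂ B, ⟪x, y⟫_ℂ = ∑ i, (starRingEnd ℂ) (x i) * y i := by
    intro x y; simp [PiLp.inner_apply, RCLike.inner_apply]; exact Finset.sum_congr rfl fun _ _ => mul_comm _ _
  have hkey : ∀ (i : B) (y : B), H.mulVec (b i) y = (μ i : ℂ) * b i y := by
    intro i y
    have h := congrFun (hH.mulVec_eigenvectorBasis i) y
    simpa [Pi.smul_apply, Complex.real_smul] using h
  have hstep : ∀ (w : B → ℂ) (i : B),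
      ∑ x, (starRingEnd ℂ) (b i x) * (H.mulVec w) x
        = (μ i : ℂ) * ∑ x, (starRingEnd ℂ) (b i x) * w x := by
    intro w i
    have hcol : ∀ x y, (starRingEnd ℂ) (H x y) = H y x := by
      intro x y
      conv_rhs => rw [← hH]
      simp [Matrix.conjTranspose_apply]
    calc ∑ x, (starRingEnd ℂ) (b i x) * (H.mulVec w) x
        = ∑ x, ∑ y, (starRingEnd ℂ) (b i x) * (H x y * w y) := by
          simp [Matrix.mulVec, dotProduct, Finset.mul_sum]
      _ = ∑ y, (∑ x, (starRingEnd ℂ) (H y x * b i x)) * w y := by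
          rw [Finset.sum_comm]
          refine Finset.sum_congr rfl fun y _ => ?_
          rw [Finset.sum_mul]
          refine Finset.sum_congr rfl fun x _ => ?_
          rw [map_mul, hcol]
          ring
      _ = ∑ y, (starRingEnd ℂ) ((H.mulVec (b i)) y) * w y := by
          refine Finset.sum_congr rfl fun y _ => ?_
          rw [← map_sum]
          simp [Matrix.mulVec, dotProduct]
      _ = (μ i : ℂ) * ∑ y, (starRingEnd ℂ) (b i y) * w y := by
          rw [Finset.mul_sum]
          refine Finset.sum_congr rfl fun y _ => ?_
          rw [hkey i y, map_mul, Complex.conj_ofReal]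
          ring
  have hrepr : ∀ (w : B → ℂ) (i : B), b.repr (WithLp.toLp 2 w) i = ∑ x, (starRingEnd ℂ) (b i x) * w x := by
    intro w i
    rw [← hinner (b i) (WithLp.toLp 2 w), b.repr_apply_apply]
  have hnormsum : ∀ w : B → ℂ, ∑ x, ‖w x‖ ^ 2 = ∑ i, ‖b.repr (WithLp.toLp 2 w) i‖ ^ 2 := by
    intro w
    have h3 := b.repr.norm_map (WithLp.toLp 2 w)
    rw [EuclideanSpace.norm_eq, EuclideanSpace.norm_eq] at h3
    exact ((Real.sqrt_inj (by positivity) (by positivity)).mp h3).symm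
  -- coordinates
  have hdd : ∀ i, (μ i : ℂ) * b.repr (WithLp.toLp 2 ψ) i = (E 0 : ℂ) * b.repr (WithLp.toLp 2 ψ) i := by
    intro i
    have h1 : b.repr (WithLp.toLp 2 (H.mulVec ψ)) i = (μ i : ℂ) * b.repr (WithLp.toLp 2 ψ) i := by
      rw [hrepr, hstep, ← hrepr]
    have h5 : b.repr (((E 0 : ℂ)) • (WithLp.toLp 2 ψ)) i = (E 0 : ℂ) * b.repr (WithLp.toLp 2 ψ) i := by
      rw [map_smul]; rfl
    rw [← h1, hground]
    exact h5
  have hpos : 0 < Fintype.card B := Fintype.card_pos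
  haveI : NeZero (Fintype.card B) := ⟨hpos.ne'⟩
  set i0 : B := σ 0 with hi0
  have hE00 : E 0 = μ i0 := by
    have := hE 0
    rwa [Nat.cast_zero] at this
  have hge : ∀ j, j ≠ i0 → E 1 ≤ μ j := by
    intro j hj
    have h1 : μ j = E (σ.symm j : ℕ) := by
      rw [hE (σ.symm j : ℕ), Fin.cast_val_eq_self, σ.apply_symm_apply]
    have h2 : 1 ≤ ((σ.symm j : Fin (Fintype.card B)) : ℕ) := by
      by_contra hcon
      push_neg at hcon
      have h4 : σ.symm j = 0 := Fin.ext (by simpa using Nat.lt_one_iff.mp hcon)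
      apply hj
      rw [hi0, ← h4, σ.apply_symm_apply]
    rw [h1]
    exact hmono h2
  have hdzero : ∀ j, j ≠ i0 → b.repr (WithLp.toLp 2 ψ) j = 0 := by
    intro j hj
    have h1 : ((μ j : ℂ) - (E 0 : ℂ)) * b.repr (WithLp.toLp 2 ψ) j = 0 := by
      have := hdd j; ring_nf; linear_combination this
    have hne : (μ j : ℂ) - (E 0 : ℂ) ≠ 0 := by
      rw [sub_ne_zero]
      exact_mod_cast ne_of_gt (lt_of_lt_of_le hgap (hge j hj))
    exact (mul_eq_zero.mp h1).resolve_left hne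
  have hd1 : ‖b.repr (WithLp.toLp 2 ψ) i0‖ ^ 2 = 1 := by
    have h1 : ∑ i, ‖b.repr (WithLp.toLp 2 ψ) i‖ ^ 2 = 1 := by rw [← hnormsum ψ]; exact hψ
    rw [← h1]
    symm
    apply Finset.sum_eq_single i0
    · intro j _ hj
      rw [hdzero j hj]; simp
    · intro h; exact absurd (Finset.mem_univ i0) h
  have hd0ne : b.repr (WithLp.toLp 2 ψ) i0 ≠ 0 := by
    intro h
    rw [h] at hd1
    simp at hd1
  have hc00 : b.repr (WithLp.toLp 2 v) i0 = 0 := by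
    have h2 := b.repr.inner_map_map (WithLp.toLp 2 ψ) (WithLp.toLp 2 v)
    rw [hinner, hinner] at h2
    have h1 : ∑ i, (starRingEnd ℂ) (b.repr (WithLp.toLp 2 ψ) i) * b.repr (WithLp.toLp 2 v) i = 0 := h2.trans hortho
    have h3 : (starRingEnd ℂ) (b.repr (WithLp.toLp 2 ψ) i0) * b.repr (WithLp.toLp 2 v) i0 = 0 := by
      rw [← h1]
      symm
      apply Finset.sum_eq_single i0
      · intro j _ hj
        rw [hdzero j hj]; simp
      · intro h; exact absurd (Finset.mem_univ i0) h
    rcases mul_eq_zero.mp h3 with h | h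
    · exfalso
      apply hd0ne
      have := congrArg (starRingEnd ℂ) h
      simpa using this
    · exact h
  have hfin : (∑ x, (starRingEnd ℂ) (v x) * H.mulVec v x).re = ∑ i, μ i * ‖b.repr (WithLp.toLp 2 v) i‖ ^ 2 := by
    have h2 := b.repr.inner_map_map (WithLp.toLp 2 v) (WithLp.toLp 2 (H.mulVec v))
    rw [hinner, hinner] at h2
    rw [← h2, Complex.re_sum]
    refine Finset.sum_congr rfl fun i _ => ?_
    have h3 : b.repr (WithLp.toLp 2 (H.mulVec v)) i = (μ i : ℂ) * b.repr (WithLp.toLp 2 v) i := by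
      rw [hrepr, hstep, ← hrepr]
    rw [h3]
    have h4 : (starRingEnd ℂ) (b.repr (WithLp.toLp 2 v) i) * ((μ i : ℂ) * b.repr (WithLp.toLp 2 v) i)
        = ((μ i * ‖b.repr (WithLp.toLp 2 v) i‖ ^ 2 : ℝ) : ℂ) := by
      rw [show (starRingEnd ℂ) (b.repr (WithLp.toLp 2 v) i) * ((μ i : ℂ) * b.repr (WithLp.toLp 2 v) i)
          = (μ i : ℂ) * ((starRingEnd ℂ) (b.repr (WithLp.toLp 2 v) i) * b.repr (WithLp.toLp 2 v) i) by ring]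
      rw [Complex.conj_mul']
      push_cast
      ring
    rw [h4, Complex.ofReal_re]
  rw [hfin, hnormsum v, Finset.mul_sum]
  apply Finset.sum_le_sum
  intro i _
  rcases eq_or_ne i i0 with h | h
  · rw [h, hc00]; simp
  · exact mul_le_mul_of_nonneg_right (hge i h) (by positivity)


set_option maxHeartbeats 2000000 in
open Fin.NatCast in
/-- History-state Hamiltonians are gapless: if `H` on `ℂ^{2ⁿ} ⊗ ℂ^{T+1}` is temporally
`k`-local with matrix elements bounded by `M` (between time blocks), and the history
state is its ground state, then `Δ_H ≤ 16·M·k(k+1)/(3(T+1))`. -/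
theorem stmt_15 (n T k : ℕ) (hT : 4 ≤ T) (hk : 1 ≤ k) (M : ℝ) (hM : 0 ≤ M)
    (H : Matrix ((Fin n → Bool) × Fin (T + 1)) ((Fin n → Bool) × Fin (T + 1)) ℂ)
    (hH : H.IsHermitian)
    -- the circuit states `ψt t`, each a unit vector:
    (ψt : Fin (T + 1) → (Fin n → Bool) → ℂ)
    (hψt : ∀ t, ∑ x, ‖ψt t x‖ ^ 2 = 1)
    -- the history state:
    (ψhist : ((Fin n → Bool) × Fin (T + 1)) → ℂ)
    (hhist : ψhist = fun p => ψt p.2 p.1 / (Real.sqrt (T + 1) : ℂ))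
    -- `H` is temporally `k`-local:
    (hloc : ∀ t t' : Fin (T + 1), (k : ℤ) < |(t : ℤ) - (t' : ℤ)| →
      ∑ x, ∑ y, (starRingEnd ℂ) (ψt t x) * H (x, t) (y, t') * ψt t' y = 0)
    -- matrix elements between time blocks are bounded by `M`:
    (hbound : ∀ t t' : Fin (T + 1),
      ‖∑ x, ∑ y, (starRingEnd ℂ) (ψt t x) * H (x, t) (y, t') * ψt t' y‖ ≤ M)
    -- `E` enumerates the eigenvalues of `H` (with multiplicity) in increasing order:
    (E : ℕ → ℝ) (hmono : Monotone E)
    (henum : ∃ σ : Fin (Fintype.card ((Fin n → Bool) × Fin (T + 1)))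
        ≃ ((Fin n → Bool) × Fin (T + 1)),
      ∀ i, E i = hH.eigenvalues (σ i))
    -- the history state is a ground state of `H`:
    (hground : H.mulVec ψhist = (E 0 : ℂ) • ψhist) :
    E 1 - E 0 ≤ 16 * M * k * (k + 1) / (3 * (T + 1)) := by
  classical
  obtain ⟨σ, hE⟩ := henum
  rcases le_or_gt (E 1) (E 0) with hle | hgap
  · have hrhs : (0:ℝ) ≤ 16 * M * k * (k + 1) / (3 * (T + 1)) := by positivity
    linarith
  have hT4 : (4:ℝ) ≤ (T:ℝ) := by exact_mod_cast hT
  have hk1 : (1:ℝ) ≤ (k:ℝ) := by exact_mod_cast hk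
  have hsPos : (0:ℝ) < Real.sqrt ((T:ℝ) + 1) := Real.sqrt_pos.mpr (by positivity)
  have hsC : ((Real.sqrt ((T:ℝ) + 1) : ℝ) : ℂ) ≠ 0 :=
    Complex.ofReal_ne_zero.mpr (ne_of_gt hsPos)
  have hsq : Real.sqrt ((T:ℝ) + 1) ^ 2 = (T:ℝ) + 1 := Real.sq_sqrt (by positivity)
  -- unit vectors, complex form
  have hunitC : ∀ t, ∑ x, (starRingEnd ℂ) (ψt t x) * ψt t x = 1 := by
    intro t
    have h1 : ∀ x, (starRingEnd ℂ) (ψt t x) * ψt t x = ((‖ψt t x‖ : ℝ) : ℂ)^2 :=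
      fun x => Complex.conj_mul' _
    calc ∑ x, (starRingEnd ℂ) (ψt t x) * ψt t x
        = ((∑ x, ‖ψt t x‖^2 : ℝ) : ℂ) := by
          push_cast
          exact Finset.sum_congr rfl fun x _ => h1 x
      _ = 1 := by rw [hψt t]; norm_num
  set hm : Fin (T+1) → Fin (T+1) → ℂ :=
    fun t t' => ∑ x, ∑ y, (starRingEnd ℂ) (ψt t x) * H (x, t) (y, t') * ψt t' y with hhm
  have hconjH : ∀ p q, (starRingEnd ℂ) (H p q) = H q p := by
    intro p q
    conv_rhs => rw [← hH]
    simp [Matrix.conjTranspose_apply]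
  have hloc' : ∀ t t' : Fin (T+1), (k : ℤ) < |(t:ℤ) - (t':ℤ)| → hm t t' = 0 := hloc
  have hbound' : ∀ t t', ‖hm t t'‖ ≤ M := hbound
  -- blockwise ground state equation
  have hgr : ∀ (t : Fin (T+1)) (x : Fin n → Bool),
      (∑ p : (Fin n → Bool) × Fin (T+1), H (x, t) p * ψt p.2 p.1) = (E 0 : ℂ) * ψt t x := by
    intro t x
    have h0 := congrFun hground (x, t)
    rw [hhist] at h0
    simp only [Matrix.mulVec, dotProduct, Pi.smul_apply, smul_eq_mul] at h0
    calc ∑ p : (Fin n → Bool) × Fin (T+1), H (x, t) p * ψt p.2 p.1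
        = (∑ p : (Fin n → Bool) × Fin (T+1),
            H (x, t) p * (ψt p.2 p.1 / ((Real.sqrt ((T:ℝ)+1) : ℝ) : ℂ)))
            * ((Real.sqrt ((T:ℝ)+1) : ℝ) : ℂ) := by
          rw [Finset.sum_mul]
          refine Finset.sum_congr rfl fun p _ => ?_
          field_simp
      _ = ((E 0 : ℂ) * (ψt t x / ((Real.sqrt ((T:ℝ)+1) : ℝ) : ℂ)))
            * ((Real.sqrt ((T:ℝ)+1) : ℝ) : ℂ) := by rw [h0]
      _ = (E 0 : ℂ) * ψt t x := by field_simp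
  -- row sums of hm
  have hrow : ∀ t, ∑ t', hm t t' = (E 0 : ℂ) := by
    intro t
    have h1 : ∀ x, ∑ t', ∑ y, H (x, t) (y, t') * ψt t' y = (E 0 : ℂ) * ψt t x := by
      intro x
      have h2 := hgr t x
      rw [Fintype.sum_prod_type] at h2
      rw [← h2, Finset.sum_comm]
    calc ∑ t', hm t t'
        = ∑ t', ∑ x, ∑ y, (starRingEnd ℂ) (ψt t x) * H (x, t) (y, t') * ψt t' y := rfl
      _ = ∑ x, ∑ t', ∑ y, (starRingEnd ℂ) (ψt t x) * H (x, t) (y, t') * ψt t' y :=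
          Finset.sum_comm
      _ = ∑ x, (starRingEnd ℂ) (ψt t x) * ∑ t', ∑ y, H (x, t) (y, t') * ψt t' y := by
          refine Finset.sum_congr rfl fun x _ => ?_
          rw [Finset.mul_sum]
          refine Finset.sum_congr rfl fun t' _ => ?_
          rw [Finset.mul_sum]
          exact Finset.sum_congr rfl fun y _ => by ring
      _ = ∑ x, (starRingEnd ℂ) (ψt t x) * ((E 0 : ℂ) * ψt t x) :=
          Finset.sum_congr rfl fun x _ => by rw [h1 x]
      _ = (E 0 : ℂ) * ∑ x, (starRingEnd ℂ) (ψt t x) * ψt t x := by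
          rw [Finset.mul_sum]
          exact Finset.sum_congr rfl fun x _ => by ring
      _ = (E 0 : ℂ) := by rw [hunitC t, mul_one]
  have hherm : ∀ t t', (starRingEnd ℂ) (hm t' t) = hm t t' := by
    intro t t'
    calc (starRingEnd ℂ) (hm t' t)
        = ∑ y, ∑ x, (starRingEnd ℂ)
            ((starRingEnd ℂ) (ψt t' y) * H (y, t') (x, t) * ψt t x) := by
          rw [show hm t' t
              = ∑ y, ∑ x, (starRingEnd ℂ) (ψt t' y) * H (y, t') (x, t) * ψt t x from rfl,
            map_sum]
          exact Finset.sum_congr rfl fun y _ => map_sum _ _ _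
      _ = ∑ x, ∑ y, (starRingEnd ℂ) (ψt t x) * H (x, t) (y, t') * ψt t' y := by
          rw [Finset.sum_comm]
          refine Finset.sum_congr rfl fun x _ => Finset.sum_congr rfl fun y _ => ?_
          simp only [map_mul, Complex.conj_conj, hconjH]
          ring
      _ = hm t t' := rfl
  have hcolsum : ∀ t', ∑ t, hm t t' = (E 0 : ℂ) := by
    intro t'
    have h1 : ∑ t, hm t t' = (starRingEnd ℂ) (∑ t, hm t' t) := by
      rw [map_sum]
      exact Finset.sum_congr rfl fun t _ => (hherm t t').symm
    rw [h1, hrow t']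
    exact Complex.conj_ofReal _
  -- the weight vector and the trial state
  set w : Fin (T+1) → ℝ := fun t => 2*(t:ℝ) - (T:ℝ) with hwdef
  set v : (Fin n → Bool) × Fin (T+1) → ℂ := fun p => ((w p.2 : ℝ) : ℂ) * ψt p.2 p.1 with hvdef
  have hWsum : ∑ t, (w t)^2 = (T:ℝ)*((T:ℝ)+1)*((T:ℝ)+2)/3 := by
    simp only [hwdef]
    exact sum_fin_wsq T
  have hW0 : ∑ t, w t = 0 := by
    simp only [hwdef]
    exact sum_fin_w T
  have hvnorm : ∑ p, ‖v p‖^2 = ∑ t, (w t)^2 := by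
    rw [Fintype.sum_prod_type, Finset.sum_comm]
    refine Finset.sum_congr rfl fun t _ => ?_
    calc ∑ x, ‖v (x, t)‖^2 = ∑ x, (w t)^2 * ‖ψt t x‖^2 := by
          refine Finset.sum_congr rfl fun x _ => ?_
          simp only [hvdef]
          rw [norm_mul, Complex.norm_real, Real.norm_eq_abs, mul_pow, sq_abs]
      _ = (w t)^2 := by rw [← Finset.mul_sum, hψt t, mul_one]
  have hortho : ∑ p, (starRingEnd ℂ) (ψhist p) * v p = 0 := by
    rw [hhist]
    rw [Fintype.sum_prod_type, Finset.sum_comm]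
    have hterm : ∀ t : Fin (T+1),
        ∑ x, (starRingEnd ℂ) (ψt t x / ((Real.sqrt ((T:ℝ)+1) : ℝ) : ℂ)) * v (x, t)
          = ((w t : ℝ) : ℂ) / ((Real.sqrt ((T:ℝ)+1) : ℝ) : ℂ) := by
      intro t
      calc ∑ x, (starRingEnd ℂ) (ψt t x / ((Real.sqrt ((T:ℝ)+1) : ℝ) : ℂ)) * v (x, t)
          = ((w t : ℝ) : ℂ) / ((Real.sqrt ((T:ℝ)+1) : ℝ) : ℂ)
              * ∑ x, (starRingEnd ℂ) (ψt t x) * ψt t x := by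
            rw [Finset.mul_sum]
            refine Finset.sum_congr rfl fun x _ => ?_
            simp only [hvdef, map_div₀, Complex.conj_ofReal]
            field_simp
        _ = ((w t : ℝ) : ℂ) / ((Real.sqrt ((T:ℝ)+1) : ℝ) : ℂ) := by
            rw [hunitC t, mul_one]
    rw [Finset.sum_congr rfl fun t _ => hterm t, ← Finset.sum_div]
    have h2 : ∑ t, ((w t : ℝ) : ℂ) = ((∑ t, w t : ℝ) : ℂ) := by push_cast; rfl
    rw [h2, hW0]
    simp
  have hunitHist : ∑ p, ‖ψhist p‖^2 = 1 := by
    rw [hhist, Fintype.sum_prod_type, Finset.sum_comm]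
    have hterm : ∀ t : Fin (T+1),
        ∑ x, ‖ψt t x / ((Real.sqrt ((T:ℝ)+1) : ℝ) : ℂ)‖^2 = 1 / ((T:ℝ)+1) := by
      intro t
      calc ∑ x, ‖ψt t x / ((Real.sqrt ((T:ℝ)+1) : ℝ) : ℂ)‖^2
          = ∑ x, ‖ψt t x‖^2 / ((T:ℝ)+1) := by
            refine Finset.sum_congr rfl fun x _ => ?_
            rw [norm_div, div_pow, Complex.norm_real, Real.norm_eq_abs, sq_abs, hsq]
        _ = 1 / ((T:ℝ)+1) := by rw [← Finset.sum_div, hψt t]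
    rw [Finset.sum_congr rfl fun t _ => hterm t, Finset.sum_const, Finset.card_univ,
      Fintype.card_fin]
    rw [nsmul_eq_mul]; push_cast; field_simp
  -- the quadratic form of the trial state
  have hQ : ∑ p, (starRingEnd ℂ) (v p) * H.mulVec v p
      = ∑ t, ∑ t', ((w t : ℝ) : ℂ) * ((w t' : ℝ) : ℂ) * hm t t' := by
    have h1 : ∑ p, (starRingEnd ℂ) (v p) * H.mulVec v p
        = ∑ p, ∑ q, (starRingEnd ℂ) (v p) * H p q * v q := by
      refine Finset.sum_congr rfl fun p _ => ?_
      simp only [Matrix.mulVec, dotProduct, Finset.mul_sum]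
      exact Finset.sum_congr rfl fun q _ => by ring
    rw [h1, swap4]
    refine Finset.sum_congr rfl fun t _ => Finset.sum_congr rfl fun t' _ => ?_
    rw [show hm t t'
        = ∑ x, ∑ y, (starRingEnd ℂ) (ψt t x) * H (x, t) (y, t') * ψt t' y from rfl]
    rw [Finset.mul_sum]
    refine Finset.sum_congr rfl fun x _ => ?_
    rw [Finset.mul_sum]
    refine Finset.sum_congr rfl fun y _ => ?_
    simp only [hvdef, map_mul, Complex.conj_ofReal]
    ring
  -- the spectral inequality
  have hspec := spectral_aux H hH E hmono σ hE ψhist hunitHist hground hgap v hortho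
  rw [hvnorm, hQ] at hspec
  -- quadratic-form identity
  set D : ℂ := ∑ t, ∑ t', (((w t - w t' : ℝ)) : ℂ)^2 * hm t t' with hD
  have e1 : ∑ t, ∑ t', ((w t : ℝ) : ℂ)^2 * hm t t'
      = (E 0 : ℂ) * ((∑ t, (w t)^2 : ℝ) : ℂ) := by
    calc ∑ t, ∑ t', ((w t : ℝ) : ℂ)^2 * hm t t'
        = ∑ t, ((w t : ℝ) : ℂ)^2 * (E 0 : ℂ) := by
          refine Finset.sum_congr rfl fun t _ => ?_
          rw [← Finset.mul_sum, hrow t]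
      _ = (E 0 : ℂ) * ((∑ t, (w t)^2 : ℝ) : ℂ) := by
          rw [← Finset.sum_mul, mul_comm]
          congr 1
          push_cast
          rfl
  have e2 : ∑ t, ∑ t', ((w t' : ℝ) : ℂ)^2 * hm t t'
      = (E 0 : ℂ) * ((∑ t, (w t)^2 : ℝ) : ℂ) := by
    rw [Finset.sum_comm]
    calc ∑ t', ∑ t, ((w t' : ℝ) : ℂ)^2 * hm t t'
        = ∑ t', ((w t' : ℝ) : ℂ)^2 * (E 0 : ℂ) := by
          refine Finset.sum_congr rfl fun t' _ => ?_
          rw [← Finset.mul_sum, hcolsum t']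
      _ = (E 0 : ℂ) * ((∑ t, (w t)^2 : ℝ) : ℂ) := by
          rw [← Finset.sum_mul, mul_comm]
          congr 1
          push_cast
          rfl
  have e3 : D = 2*(E 0 : ℂ) * ((∑ t, (w t)^2 : ℝ) : ℂ)
      - 2 * ∑ t, ∑ t', ((w t : ℝ) : ℂ) * ((w t' : ℝ) : ℂ) * hm t t' := by
    have hterm : ∀ t t' : Fin (T+1), (((w t - w t' : ℝ)) : ℂ)^2 * hm t t'
        = ((w t : ℝ) : ℂ)^2 * hm t t' + ((w t' : ℝ) : ℂ)^2 * hm t t'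
          - 2 * (((w t : ℝ) : ℂ) * ((w t' : ℝ) : ℂ) * hm t t') := by
      intro t t'
      push_cast
      ring
    calc D = ∑ t, ∑ t', (((w t : ℝ) : ℂ)^2 * hm t t' + ((w t' : ℝ) : ℂ)^2 * hm t t'
          - 2 * (((w t : ℝ) : ℂ) * ((w t' : ℝ) : ℂ) * hm t t')) := by
          rw [hD]
          exact Finset.sum_congr rfl fun t _ => Finset.sum_congr rfl fun t' _ => hterm t t'
      _ = (∑ t, ∑ t', ((w t : ℝ) : ℂ)^2 * hm t t')
          + (∑ t, ∑ t', ((w t' : ℝ) : ℂ)^2 * hm t t')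
          - 2 * ∑ t, ∑ t', ((w t : ℝ) : ℂ) * ((w t' : ℝ) : ℂ) * hm t t' := by
          simp only [Finset.sum_add_distrib, Finset.sum_sub_distrib, ← Finset.mul_sum]
      _ = _ := by rw [e1, e2]; ring
  have hid : ∑ t, ∑ t', ((w t : ℝ) : ℂ) * ((w t' : ℝ) : ℂ) * hm t t'
      = (E 0 : ℂ) * ((∑ t, (w t)^2 : ℝ) : ℂ) - D/2 := by
    linear_combination ((1:ℂ)/2) * e3
  -- bound |D|
  have habs : ‖D‖ ≤ 8 * M * ((T:ℝ)+1)
      * (((min k T : ℕ) : ℝ)*(((min k T : ℕ) : ℝ)+1)*(2*((min k T : ℕ) : ℝ)+1)/6) := by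
    have h1 : ‖D‖ ≤ ∑ t, ∑ t', (w t - w t')^2 * ‖hm t t'‖ := by
      rw [hD]
      refine le_trans (norm_sum_le _ _) (Finset.sum_le_sum fun t _ => ?_)
      refine le_trans (norm_sum_le _ _) (Finset.sum_le_sum fun t' _ => ?_)
      rw [norm_mul, norm_pow, Complex.norm_real, Real.norm_eq_abs, sq_abs]
    have h2 : ∀ t : Fin (T+1), ∑ t', (w t - w t')^2 * ‖hm t t'‖
        ≤ 4 * M * (2 * (((min k T : ℕ) : ℝ)*(((min k T : ℕ) : ℝ)+1)
          *(2*((min k T : ℕ) : ℝ)+1)/6)) := by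
      intro t
      have hle : ∀ t' : Fin (T+1), (w t - w t')^2 * ‖hm t t'‖
          ≤ if t' ≠ t ∧ |(t:ℤ) - (t':ℤ)| ≤ (k:ℤ) then 4*M*((t:ℝ)-(t':ℝ))^2 else 0 := by
        intro t'
        by_cases hmem : t' ≠ t ∧ |(t:ℤ) - (t':ℤ)| ≤ (k:ℤ)
        · rw [if_pos hmem]
          have hsq2 : (w t - w t')^2 = 4*((t:ℝ)-(t':ℝ))^2 := by
            simp only [hwdef]; ring
          rw [hsq2]
          calc 4*((t:ℝ)-(t':ℝ))^2 * ‖hm t t'‖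
              ≤ 4*((t:ℝ)-(t':ℝ))^2 * M :=
                mul_le_mul_of_nonneg_left (hbound' t t') (by positivity)
            _ = 4*M*((t:ℝ)-(t':ℝ))^2 := by ring
        · rw [if_neg hmem]
          push_neg at hmem
          rcases eq_or_ne t' t with hvv | hvv
          · subst hvv
            simp
          · have hk2 : (k:ℤ) < |(t:ℤ) - (t':ℤ)| := hmem hvv
            rw [hloc' t t' hk2]
            simp
      calc ∑ t', (w t - w t')^2 * ‖hm t t'‖
          ≤ ∑ t' : Fin (T+1), (if t' ≠ t ∧ |(t:ℤ) - (t':ℤ)| ≤ (k:ℤ)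
              then 4*M*((t:ℝ)-(t':ℝ))^2 else 0) := Finset.sum_le_sum fun t' _ => hle t'
        _ = ∑ t' ∈ Finset.univ.filter
              (fun t' : Fin (T+1) => t' ≠ t ∧ |(t:ℤ) - (t':ℤ)| ≤ (k:ℤ)),
              4*M*((t:ℝ)-(t':ℝ))^2 := (Finset.sum_filter _ _).symm
        _ = 4*M * ∑ t' ∈ Finset.univ.filter
              (fun t' : Fin (T+1) => t' ≠ t ∧ |(t:ℤ) - (t':ℤ)| ≤ (k:ℤ)),
              ((t:ℝ)-(t':ℝ))^2 := by
            rw [Finset.mul_sum]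
        _ ≤ 4*M * (2 * (((min k T : ℕ) : ℝ)*(((min k T : ℕ) : ℝ)+1)
            *(2*((min k T : ℕ) : ℝ)+1)/6)) :=
            mul_le_mul_of_nonneg_left (inner_sq_bound T k t) (by positivity)
    calc ‖D‖ ≤ ∑ t, ∑ t', (w t - w t')^2 * ‖hm t t'‖ := h1
      _ ≤ ∑ t : Fin (T+1), 4 * M * (2 * (((min k T : ℕ) : ℝ)*(((min k T : ℕ) : ℝ)+1)
          *(2*((min k T : ℕ) : ℝ)+1)/6)) := Finset.sum_le_sum fun t _ => h2 t
      _ = 8 * M * ((T:ℝ)+1) * (((min k T : ℕ) : ℝ)*(((min k T : ℕ) : ℝ)+1)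
          *(2*((min k T : ℕ) : ℝ)+1)/6) := by
          rw [Finset.sum_const, Finset.card_univ, Fintype.card_fin]
          push_cast
          ring
  -- take real parts
  have hre : (∑ t, ∑ t', ((w t : ℝ) : ℂ) * ((w t' : ℝ) : ℂ) * hm t t').re
      ≤ E 0 * (∑ t, (w t)^2) + ‖D‖ / 2 := by
    rw [hid, Complex.sub_re]
    have hre1 : ((E 0 : ℂ) * ((∑ t, (w t)^2 : ℝ) : ℂ)).re = E 0 * ∑ t, (w t)^2 := by
      rw [← Complex.ofReal_mul, Complex.ofReal_re]
    have hre2 : (D/2).re = D.re/2 := by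
      rw [show (2:ℂ) = ((2:ℝ):ℂ) by norm_num, Complex.div_ofReal_re]
    have hre3 : -(D.re) ≤ ‖D‖ :=
      le_trans (neg_le_abs _) (Complex.abs_re_le_norm D)
    rw [hre1, hre2]
    linarith
  -- combine
  have hmain : (E 1 - E 0) * ((T:ℝ)*((T:ℝ)+1)*((T:ℝ)+2)/3)
      ≤ 4 * M * ((T:ℝ)+1) * (((min k T : ℕ) : ℝ)*(((min k T : ℕ) : ℝ)+1)
        *(2*((min k T : ℕ) : ℝ)+1)/6) := by
    have h3 := le_trans hspec hre
    rw [hWsum] at h3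
    linarith [habs]
  -- final arithmetic
  have hak : ((min k T : ℕ) : ℝ) ≤ (k:ℝ) := by exact_mod_cast Nat.cast_le.mpr (min_le_left k T)
  have haT : ((min k T : ℕ) : ℝ) ≤ (T:ℝ) := by exact_mod_cast Nat.cast_le.mpr (min_le_right k T)
  have ha0 : (0:ℝ) ≤ ((min k T : ℕ) : ℝ) := Nat.cast_nonneg _
  set A : ℝ := ((min k T : ℕ) : ℝ) with hA
  have hmain2 : (E 1 - E 0) * ((T:ℝ)*((T:ℝ)+1)*((T:ℝ)+2))
      ≤ 2 * M * ((T:ℝ)+1) * (A*(A+1)*(2*A+1)) := by linarith [hmain]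
  have hprod : (A*(A+1)) * (6*((T:ℝ)+1)*(2*A+1))
      ≤ ((k:ℝ)*((k:ℝ)+1)) * (16*((T:ℝ)*((T:ℝ)+2))) := by
    have p1 : A*(A+1) ≤ (k:ℝ)*((k:ℝ)+1) :=
      mul_le_mul hak (by linarith) (by linarith) (by positivity)
    have p2 : 6*((T:ℝ)+1)*(2*A+1) ≤ 16*((T:ℝ)*((T:ℝ)+2)) := by
      have q1 : 2*A+1 ≤ 2*(T:ℝ)+1 := by linarith
      have q2 : 6*((T:ℝ)+1)*(2*A+1) ≤ 6*((T:ℝ)+1)*(2*(T:ℝ)+1) :=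
        mul_le_mul_of_nonneg_left q1 (by positivity)
      have q3 : 6*((T:ℝ)+1)*(2*(T:ℝ)+1) ≤ 16*((T:ℝ)*((T:ℝ)+2)) := by
        nlinarith [hT4, mul_self_nonneg ((T:ℝ))]
      linarith
    exact mul_le_mul p1 p2 (by positivity) (by positivity)
  have s1 : 3*((T:ℝ)+1) * ((E 1 - E 0) * ((T:ℝ)*((T:ℝ)+1)*((T:ℝ)+2)))
      ≤ 3*((T:ℝ)+1) * (2 * M * ((T:ℝ)+1) * (A*(A+1)*(2*A+1))) :=
    mul_le_mul_of_nonneg_left hmain2 (by positivity)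
  have s2 : M*((T:ℝ)+1) * ((A*(A+1)) * (6*((T:ℝ)+1)*(2*A+1)))
      ≤ M*((T:ℝ)+1) * (((k:ℝ)*((k:ℝ)+1)) * (16*((T:ℝ)*((T:ℝ)+2)))) :=
    mul_le_mul_of_nonneg_left hprod (by positivity)
  have s3 : ((E 1 - E 0) * (3*((T:ℝ)+1))) * ((T:ℝ)*((T:ℝ)+2)*((T:ℝ)+1))
      ≤ (16*M*(k:ℝ)*((k:ℝ)+1)) * ((T:ℝ)*((T:ℝ)+2)*((T:ℝ)+1)) := by nlinarith [s1, s2]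
  have hposT : (0:ℝ) < (T:ℝ)*((T:ℝ)+2)*((T:ℝ)+1) :=
    mul_pos (mul_pos (by linarith) (by linarith)) (by linarith)
  have s4 : (E 1 - E 0) * (3*((T:ℝ)+1)) ≤ 16*M*(k:ℝ)*((k:ℝ)+1) :=
    le_of_mul_le_mul_right s3 hposT
  rw [le_div_iff₀ (by positivity : (0:ℝ) < 3*((T:ℝ)+1))]
  calc (E 1 - E 0) * (3*((T:ℝ)+1)) ≤ 16*M*(k:ℝ)*((k:ℝ)+1) := s4
    _ = 16*M*(k:ℝ)*((k:ℝ)+1) := rfl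
end
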